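/- arXiv:2403.13605 — 6 statements merged into one kernel-verified Lean document; each statement's English description precedes it below -/
import Mathlib

section
/- Suppose the system (A,B,C,D) is internally symmetric, i.e., there exist signature matrices Σ_i ∈ ℝ^{n×n} and Σ_e ∈ ℝ^{m×m} such that Σ_i·A = A'·Σ_i, C'·Σ_e = −Σ_i·B, and Σ_e·D = D'·Σ_e. Then the system is externally symmetric with signature Σ_e: for all t ≥ 0, Σ_e·(C·exp(At)·B)' = (C·exp(At)·B)·Σ_e, and Σ_e·D' = D·Σ_e. -/
open MeasureTheory Matrix Filter
open scoped ENNReal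

/-- Matrix exponential `exp(tA)`. -/
noncomputable def mexp {n : ℕ} (A : Matrix (Fin n) (Fin n) ℝ) (t : ℝ) :
    Matrix (Fin n) (Fin n) ℝ := NormedSpace.exp (t • A)

/-- The system operator `(𝒢u)(t) = ∫_0^t C e^{A(t-τ)} B u(τ) dτ + D u(t)`. -/
noncomputable def Gop {n m : ℕ} (A : Matrix (Fin n) (Fin n) ℝ)
    (B : Matrix (Fin n) (Fin m) ℝ) (C : Matrix (Fin m) (Fin n) ℝ)
    (D : Matrix (Fin m) (Fin m) ℝ) (u : ℝ → Fin m → ℝ) (t : ℝ) : Fin m → ℝ :=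
  (∫ τ in (0:ℝ)..t, (C * mexp A (t - τ) * B).mulVec (u τ)) + D.mulVec (u t)

/-- Natural response `d_{x0}(t) = C e^{At} x0`. -/
noncomputable def natResp {n m : ℕ} (A : Matrix (Fin n) (Fin n) ℝ)
    (C : Matrix (Fin m) (Fin n) ℝ) (x0 : Fin n → ℝ) (t : ℝ) : Fin m → ℝ :=
  (C * mexp A t).mulVec x0

/-- Inner product on L²(0,t_f;ℝ^m). -/
noncomputable def l2ip {m : ℕ} (tf : ℝ) (u v : ℝ → Fin m → ℝ) : ℝ :=
  ∫ t in Set.Ioc 0 tf, u t ⬝ᵥ v t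

/-- Norm on L²(0,t_f;ℝ^m). -/
noncomputable def l2norm {m : ℕ} (tf : ℝ) (u : ℝ → Fin m → ℝ) : ℝ :=
  Real.sqrt (l2ip tf u u)

/-- Membership in L²(0,t_f;ℝ^m). -/
def MemL2 {m : ℕ} (tf : ℝ) (u : ℝ → Fin m → ℝ) : Prop :=
  AEStronglyMeasurable u (volume.restrict (Set.Ioc 0 tf)) ∧
    IntegrableOn (fun t => u t ⬝ᵥ u t) (Set.Ioc 0 tf)

/-- Membership in L^m_∞(0,t_f). -/
def MemLinf {m : ℕ} (tf : ℝ) (u : ℝ → Fin m → ℝ) : Prop :=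
  AEStronglyMeasurable u (volume.restrict (Set.Ioc 0 tf)) ∧
    eLpNorm u ⊤ (volume.restrict (Set.Ioc 0 tf)) < ⊤

/-- A signature matrix: diagonal with ±1 entries. -/
def IsSignature {m : ℕ} (S : Matrix (Fin m) (Fin m) ℝ) : Prop :=
  ∃ d : Fin m → ℝ, (∀ i, d i = 1 ∨ d i = -1) ∧ S = Matrix.diagonal d

/-- External symmetry with signature `Sg`. -/
def ExtSym {n m : ℕ} (A : Matrix (Fin n) (Fin n) ℝ) (B : Matrix (Fin n) (Fin m) ℝ)
    (C : Matrix (Fin m) (Fin n) ℝ) (D : Matrix (Fin m) (Fin m) ℝ)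
    (Sg : Matrix (Fin m) (Fin m) ℝ) : Prop :=
  (∀ t : ℝ, 0 ≤ t → Sg * (C * mexp A t * B)ᵀ = (C * mexp A t * B) * Sg) ∧
    Sg * Dᵀ = D * Sg

/-- Spectral norm of a square matrix. -/
noncomputable def spec {m : ℕ} (M : Matrix (Fin m) (Fin m) ℝ) : ℝ :=
  ‖Matrix.toEuclideanCLM (𝕜 := ℝ) M‖

/-- Maximum absolute row sum norm of a square matrix. -/
noncomputable def rowSumNorm {m : ℕ} (M : Matrix (Fin m) (Fin m) ℝ) : ℝ :=
  ⨆ i, ∑ j, |M i j|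

/-- The operator `𝒯(u) = -R⁻¹ Σ J𝒢(Σ Q (J(𝒢u + d_{x0})))`. -/
noncomputable def TOp {n m : ℕ} (A : Matrix (Fin n) (Fin n) ℝ) (B : Matrix (Fin n) (Fin m) ℝ)
    (C : Matrix (Fin m) (Fin n) ℝ) (D : Matrix (Fin m) (Fin m) ℝ)
    (Sg Q R : Matrix (Fin m) (Fin m) ℝ) (x0 : Fin n → ℝ) (tf : ℝ)
    (u : ℝ → Fin m → ℝ) (t : ℝ) : Fin m → ℝ :=
  -(R⁻¹.mulVec (Sg.mulVec (Gop A B C D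
      (fun s => Sg.mulVec (Q.mulVec (Gop A B C D u (tf - s) + natResp A C x0 (tf - s))))
      (tf - t))))

/-- The operator `𝒮(u) = -R⁻¹ Σ J𝒢(Σ Q (J𝒢u))`. -/
noncomputable def SOp {n m : ℕ} (A : Matrix (Fin n) (Fin n) ℝ) (B : Matrix (Fin n) (Fin m) ℝ)
    (C : Matrix (Fin m) (Fin n) ℝ) (D : Matrix (Fin m) (Fin m) ℝ)
    (Sg Q R : Matrix (Fin m) (Fin m) ℝ) (tf : ℝ)
    (u : ℝ → Fin m → ℝ) (t : ℝ) : Fin m → ℝ :=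
  -(R⁻¹.mulVec (Sg.mulVec (Gop A B C D
      (fun s => Sg.mulVec (Q.mulVec (Gop A B C D u (tf - s)))) (tf - t))))

/-- The quadratic cost `J(x0,u)`. -/
noncomputable def Jcost {n m : ℕ} (A : Matrix (Fin n) (Fin n) ℝ) (B : Matrix (Fin n) (Fin m) ℝ)
    (C : Matrix (Fin m) (Fin n) ℝ) (D : Matrix (Fin m) (Fin m) ℝ)
    (Q R : Matrix (Fin m) (Fin m) ℝ) (x0 : Fin n → ℝ) (tf : ℝ)
    (u : ℝ → Fin m → ℝ) : ℝ :=
  (1/2) * ∫ t in Set.Ioc 0 tf,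
    ((Gop A B C D u t + natResp A C x0 t) ⬝ᵥ Q.mulVec (Gop A B C D u t + natResp A C x0 t)
      + u t ⬝ᵥ R.mulVec (u t))

/-- an internally symmetric system is externally symmetric. -/
theorem internal_symmetry_implies_external_symmetry {n m : ℕ}
    (A : Matrix (Fin n) (Fin n) ℝ) (B : Matrix (Fin n) (Fin m) ℝ)
    (C : Matrix (Fin m) (Fin n) ℝ) (D : Matrix (Fin m) (Fin m) ℝ)
    (Si : Matrix (Fin n) (Fin n) ℝ) (Sg : Matrix (Fin m) (Fin m) ℝ)
    (hSi : IsSignature Si) (hSg : IsSignature Sg)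
    (h1 : Si * A = Aᵀ * Si) (h2 : Cᵀ * Sg = -(Si * B)) (h3 : Sg * D = Dᵀ * Sg) :
    (∀ t : ℝ, 0 ≤ t → Sg * (C * mexp A t * B)ᵀ = (C * mexp A t * B) * Sg) ∧
      Sg * Dᵀ = D * Sg := by
  have sq : ∀ {k : ℕ} (S : Matrix (Fin k) (Fin k) ℝ), IsSignature S → S * S = 1 := by
    rintro k S ⟨d, hd, rfl⟩
    rw [Matrix.diagonal_mul_diagonal]
    ext i j
    rcases hd i with h | h <;>
      simp [Matrix.diagonal, Matrix.one_apply, h]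
  have symm : ∀ {k : ℕ} (S : Matrix (Fin k) (Fin k) ℝ), IsSignature S → Sᵀ = S := by
    rintro k S ⟨d, hd, rfl⟩
    simp [Matrix.diagonal_transpose]
  have hSi2 := sq Si hSi
  have hSg2 := sq Sg hSg
  have hSit := symm Si hSi
  have hSgt := symm Sg hSg
  have hSiinv : Si⁻¹ = Si := Matrix.inv_eq_right_inv hSi2
  have hSiu : IsUnit Si := Matrix.isUnit_iff_isUnit_det Si |>.mpr
    (IsUnit.of_mul_eq_one _ (by rw [← Matrix.det_mul, hSi2, Matrix.det_one]))
  have hexp : ∀ t : ℝ, Si * mexp A t = (mexp A t)ᵀ * Si := by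
    intro t
    have hc : Si * (t • A) * Si⁻¹ = t • Aᵀ := by
      rw [hSiinv, Matrix.mul_smul, Matrix.smul_mul]
      congr 1
      calc Si * A * Si = (Aᵀ * Si) * Si := by rw [h1]
        _ = Aᵀ * (Si * Si) := by rw [mul_assoc]
        _ = Aᵀ := by rw [hSi2, Matrix.mul_one]
    have hconj := Matrix.exp_conj Si (t • A) hSiu
    rw [hc, hSiinv] at hconj
    have htr : NormedSpace.exp (t • Aᵀ) = (NormedSpace.exp (t • A))ᵀ := by
      rw [← Matrix.transpose_smul, Matrix.exp_transpose]
    rw [htr] at hconj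
    unfold mexp
    calc Si * NormedSpace.exp (t • A)
        = Si * NormedSpace.exp (t • A) * (Si * Si) := by rw [hSi2, Matrix.mul_one]
      _ = (Si * NormedSpace.exp (t • A) * Si) * Si := by
          simp only [Matrix.mul_assoc]
      _ = (NormedSpace.exp (t • A))ᵀ * Si := by rw [← hconj]
  have hC : Si * Cᵀ = -(B * Sg) := by
    have h2' : Si * (Cᵀ * Sg) = Si * (-(Si * B)) := by rw [h2]
    rw [Matrix.mul_neg, ← Matrix.mul_assoc Si Si B, hSi2, Matrix.one_mul] at h2'
    calc Si * Cᵀ = Si * Cᵀ * (Sg * Sg) := by rw [hSg2, Matrix.mul_one]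
      _ = (Si * (Cᵀ * Sg)) * Sg := by simp only [Matrix.mul_assoc]
      _ = -B * Sg := by rw [h2']
      _ = -(B * Sg) := by simp only [Matrix.neg_mul]
  have hB : Sg * Bᵀ = -(C * Si) := by
    have hCt := congrArg Matrix.transpose hC
    rw [Matrix.transpose_mul, Matrix.transpose_neg, Matrix.transpose_mul,
      Matrix.transpose_transpose, hSit, hSgt] at hCt
    rw [hCt, neg_neg]
  constructor
  · intro t ht
    have hSiE : Si * (mexp A t)ᵀ = mexp A t * Si := by
      calc Si * (mexp A t)ᵀ
          = Si * (mexp A t)ᵀ * (Si * Si) := by rw [hSi2, Matrix.mul_one]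
        _ = Si * ((mexp A t)ᵀ * Si) * Si := by simp only [Matrix.mul_assoc]
        _ = Si * (Si * mexp A t) * Si := by rw [← hexp t]
        _ = (Si * Si) * (mexp A t * Si) := by simp only [Matrix.mul_assoc]
        _ = mexp A t * Si := by rw [hSi2, Matrix.one_mul]
    calc Sg * (C * mexp A t * B)ᵀ
        = (Sg * Bᵀ) * ((mexp A t)ᵀ * Cᵀ) := by
          rw [Matrix.transpose_mul, Matrix.transpose_mul]
          simp only [Matrix.mul_assoc]
      _ = -(C * Si) * ((mexp A t)ᵀ * Cᵀ) := by rw [hB]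
      _ = -(C * (Si * (mexp A t)ᵀ * Cᵀ)) := by
          simp only [Matrix.neg_mul, Matrix.mul_assoc]
      _ = -(C * (mexp A t * Si * Cᵀ)) := by rw [hSiE]
      _ = -(C * (mexp A t * (Si * Cᵀ))) := by simp only [Matrix.mul_assoc]
      _ = -(C * (mexp A t * -(B * Sg))) := by rw [hC]
      _ = C * mexp A t * B * Sg := by
          simp only [Matrix.mul_neg, neg_neg, Matrix.mul_assoc]
  · calc Sg * Dᵀ = Sg * Dᵀ * (Sg * Sg) := by rw [hSg2, Matrix.mul_one]
      _ = Sg * (Dᵀ * Sg) * Sg := by simp only [Matrix.mul_assoc]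
      _ = Sg * (Sg * D) * Sg := by rw [← h3]
      _ = (Sg * Sg) * (D * Sg) := by simp only [Matrix.mul_assoc]
      _ = D * Sg := by rw [hSg2, Matrix.one_mul]
end

section
/- Every real square matrix A ∈ ℝ^{n×n} can be factored as A = S·T, where S ∈ ℝ^{n×n} and T ∈ ℝ^{n×n} are both symmetric matrices and T is invertible. -/
open Polynomial DirectSum
open scoped DirectSum

noncomputable section SymFact

/-- A "good form" on an `ℝ[X]`-module: an `ℝ`-bilinear, symmetric, nondegenerate form
intertwining the `X`-action. -/
def HasGoodForm (N : Type) [AddCommGroup N] [Module ℝ N] [Module ℝ[X] N] : Prop :=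
  ∃ B : N →ₗ[ℝ] N →ₗ[ℝ] ℝ,
    (∀ x y, B x y = B y x) ∧ (∀ x, (∀ y, B x y = 0) → x = 0) ∧
    (∀ x y, B ((X : ℝ[X]) • x) y = B x ((X : ℝ[X]) • y))

/-- the coefficient functional on the quotient -/
def lamQ (q : ℝ[X]) (hq : q.Monic) : (ℝ[X] ⧸ Ideal.span {q}) →ₗ[ℝ] ℝ :=
  (Submodule.liftQ ((Ideal.span {q}).restrictScalars ℝ)
      ((Polynomial.lcoeff ℝ (q.natDegree - 1)).comp (Polynomial.modByMonicHom q)) (by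
        intro x hx
        simp only [Submodule.restrictScalars_mem, Ideal.mem_span_singleton] at hx
        simp [LinearMap.mem_ker, (modByMonic_eq_zero_iff_dvd hq).2 hx])).comp
    (Submodule.Quotient.restrictScalarsEquiv ℝ (Ideal.span {q})).symm.toLinearMap

lemma lamQ_mk (q : ℝ[X]) (hq : q.Monic) (f : ℝ[X]) :
    lamQ q hq (Ideal.Quotient.mk _ f) = (f %ₘ q).coeff (q.natDegree - 1) := by
  have : (Ideal.Quotient.mk (Ideal.span {q})) f
      = Submodule.Quotient.mk (p := Ideal.span {q}) f := rfl
  rw [lamQ, LinearMap.comp_apply, this, LinearEquiv.coe_coe,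
    Submodule.Quotient.restrictScalarsEquiv_symm_mk, Submodule.liftQ_apply]
  rfl

lemma mk_smul' (q : ℝ[X]) (c : ℝ) (f : ℝ[X]) :
    c • (Ideal.Quotient.mk (Ideal.span {q}) f) = Ideal.Quotient.mk (Ideal.span {q}) (c • f) :=
  (Submodule.Quotient.mk_smul (Ideal.span {q}) c f).symm

theorem hasGoodForm_quotient (q : ℝ[X]) (hq : q.Monic) :
    HasGoodForm (ℝ[X] ⧸ Ideal.span {q}) := by
  classical
  set Q := ℝ[X] ⧸ Ideal.span {q}
  refine ⟨LinearMap.mk₂ ℝ (fun x y => lamQ q hq (x * y))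
    (fun x x' y => by simp only [add_mul, map_add])
    (fun c x y => by
      obtain ⟨f, rfl⟩ := Ideal.Quotient.mk_surjective (I := Ideal.span {q}) x
      obtain ⟨g, rfl⟩ := Ideal.Quotient.mk_surjective (I := Ideal.span {q}) y
      simp only [mk_smul', ← map_mul, smul_mul_assoc, map_smul]
      rw [lamQ_mk, lamQ_mk, smul_modByMonic]; simp [coeff_smul])
    (fun x y y' => by simp only [mul_add, map_add])
    (fun c x y => by
      obtain ⟨f, rfl⟩ := Ideal.Quotient.mk_surjective (I := Ideal.span {q}) x
      obtain ⟨g, rfl⟩ := Ideal.Quotient.mk_surjective (I := Ideal.span {q}) y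
      simp only [mk_smul', ← map_mul, mul_smul_comm, map_smul]
      rw [lamQ_mk, lamQ_mk, smul_modByMonic]; simp [coeff_smul]), ?_, ?_, ?_⟩
  · intro x y; simp only [LinearMap.mk₂_apply, mul_comm]
  · intro x hx
    obtain ⟨f, rfl⟩ := Ideal.Quotient.mk_surjective (I := Ideal.span {q}) x
    by_cases hq1 : q.natDegree = 0
    · have : q = 1 := Monic.natDegree_eq_zero hq |>.mp hq1
      subst this
      have : Ideal.span {(1:ℝ[X])} = ⊤ := by simp
      exact Ideal.Quotient.eq_zero_iff_mem.mpr (this ▸ Submodule.mem_top)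
    by_contra hne
    have hf0 : f %ₘ q ≠ 0 := by
      intro h
      exact hne (Ideal.Quotient.eq_zero_iff_mem.mpr
        (Ideal.mem_span_singleton.mpr ((modByMonic_eq_zero_iff_dvd hq).1 h)))
    set f0 := f %ₘ q with hf0def
    have hdeg : f0.natDegree < q.natDegree := natDegree_modByMonic_lt f hq (fun h => hq1 (by simp [h]))
    have := hx (Ideal.Quotient.mk _ (X ^ (q.natDegree - 1 - f0.natDegree)))
    rw [LinearMap.mk₂_apply, ← map_mul, lamQ_mk] at this
    have hmod : (f * X ^ (q.natDegree - 1 - f0.natDegree)) %ₘ q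
        = f0 * X ^ (q.natDegree - 1 - f0.natDegree) := by
      have h1 : (f * X ^ (q.natDegree - 1 - f0.natDegree)) %ₘ q
          = (f0 * X ^ (q.natDegree - 1 - f0.natDegree)) %ₘ q := by
        have : q ∣ (f - f0) := ⟨f /ₘ q, by
          have h := modByMonic_add_div f q
          rw [hf0def]; linear_combination -h⟩
        have : q ∣ f * X ^ (q.natDegree - 1 - f0.natDegree)
            - f0 * X ^ (q.natDegree - 1 - f0.natDegree) := by
          rw [← sub_mul]; exact this.mul_right _
        rw [← sub_eq_zero, ← sub_modByMonic, (modByMonic_eq_zero_iff_dvd hq).2 this]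
      rw [h1, modByMonic_eq_self_iff hq]
      apply degree_lt_degree
      have hX : ((X : ℝ[X]) ^ (q.natDegree - 1 - f0.natDegree)).leadingCoeff ≠ 0 := by
        simp [leadingCoeff_X_pow]
      rw [natDegree_mul' (by simp [hX, hf0]), natDegree_X_pow]
      omega
    rw [hmod] at this
    rw [coeff_mul_X_pow'] at this
    have hle : q.natDegree - 1 - f0.natDegree ≤ q.natDegree - 1 := by omega
    rw [if_pos hle] at this
    have : f0.coeff f0.natDegree = 0 := by
      convert this using 2
      omega
    exact hf0 (leadingCoeff_eq_zero.mp this)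
  · intro x y
    obtain ⟨f, rfl⟩ := Ideal.Quotient.mk_surjective (I := Ideal.span {q}) x
    obtain ⟨g, rfl⟩ := Ideal.Quotient.mk_surjective (I := Ideal.span {q}) y
    have h1 : (X : ℝ[X]) • (Ideal.Quotient.mk (Ideal.span {q}) f)
        = Ideal.Quotient.mk _ (X * f) := rfl
    have h2 : (X : ℝ[X]) • (Ideal.Quotient.mk (Ideal.span {q}) g)
        = Ideal.Quotient.mk _ (X * g) := rfl
    rw [h1, h2]
    simp only [LinearMap.mk₂_apply, ← map_mul]
    ring_nf

theorem HasGoodForm.of_equiv {N N' : Type} [AddCommGroup N] [Module ℝ N] [Module ℝ[X] N]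
    [IsScalarTower ℝ ℝ[X] N] [AddCommGroup N'] [Module ℝ N'] [Module ℝ[X] N']
    [IsScalarTower ℝ ℝ[X] N'] (e : N' ≃ₗ[ℝ[X]] N) (h : HasGoodForm N) : HasGoodForm N' := by
  obtain ⟨B, hsymm, hnd, hX⟩ := h
  have he : ∀ x : N', e x = (e.restrictScalars ℝ) x := fun _ => rfl
  refine ⟨B.compl₁₂ (e.restrictScalars ℝ).toLinearMap (e.restrictScalars ℝ).toLinearMap,
    ?_, ?_, ?_⟩
  · intro x y; simp only [LinearMap.compl₁₂_apply]; exact hsymm _ _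
  · intro x hx
    have h0 : ∀ y : N, B (e x) y = 0 := fun y => by
      have h1 := hx (e.symm y)
      rw [LinearMap.compl₁₂_apply] at h1
      simpa only [LinearEquiv.coe_coe, LinearEquiv.restrictScalars_apply,
        e.apply_symm_apply] using h1
    exact e.map_eq_zero_iff.mp (hnd (e x) h0)
  · intro x y
    simp only [LinearMap.compl₁₂_apply, LinearEquiv.coe_coe, LinearEquiv.restrictScalars_apply]
    rw [show e ((X : ℝ[X]) • x) = (X : ℝ[X]) • e x from map_smul e _ _,
      show e ((X : ℝ[X]) • y) = (X : ℝ[X]) • e y from map_smul e _ _]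
    exact hX _ _

theorem hasGoodForm_directSum {ι : Type} [Fintype ι] [DecidableEq ι] (N : ι → Type)
    [∀ i, AddCommGroup (N i)] [∀ i, Module ℝ (N i)] [∀ i, Module ℝ[X] (N i)]
    [∀ i, IsScalarTower ℝ ℝ[X] (N i)] (h : ∀ i, HasGoodForm (N i)) :
    HasGoodForm (⨁ i, N i) := by
  choose B hsymm hnd hX using h
  have happ : ∀ (i : ι) (x : ⨁ i, N i), ((X : ℝ[X]) • x) i = (X : ℝ[X]) • (x i) :=
    fun i x => DirectSum.smul_apply _ _ _
  refine ⟨LinearMap.mk₂ ℝ (fun x y => ∑ i, B i (x i) (y i))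
    (fun x x' y => by simp [Finset.sum_add_distrib])
    (fun c x y => by simp [DirectSum.smul_apply, Finset.mul_sum])
    (fun x y y' => by simp [Finset.sum_add_distrib])
    (fun c x y => by simp [DirectSum.smul_apply, Finset.mul_sum]), ?_, ?_, ?_⟩
  · intro x y
    simp only [LinearMap.mk₂_apply]
    exact Finset.sum_congr rfl fun i _ => hsymm i _ _
  · intro x hx
    refine DirectSum.ext fun i => ?_
    refine hnd i (x i) fun z => ?_
    have := hx (DirectSum.lof ℝ[X] ι N i z)
    simp only [LinearMap.mk₂_apply] at this
    rw [Finset.sum_eq_single i] at this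
    · simpa [DirectSum.lof_apply] using this
    · intro j _ hj
      have hz : (DirectSum.lof ℝ[X] ι N i z) j = 0 := by
        rw [DirectSum.lof_eq_of]; exact DirectSum.of_eq_of_ne _ _ _ hj
      rw [hz]; simp
    · simp
  · intro x y
    simp only [LinearMap.mk₂_apply]
    refine Finset.sum_congr rfl fun i _ => ?_
    rw [happ, happ]
    exact hX i _ _

end SymFact

open Matrix in
/-- every real square matrix factors as a product of two symmetric
matrices, the second of which is invertible. -/
theorem exists_symmetric_factorization {n : ℕ} (A : Matrix (Fin n) (Fin n) ℝ) :
    ∃ S T : Matrix (Fin n) (Fin n) ℝ, S.IsSymm ∧ T.IsSymm ∧ IsUnit T ∧ A = S * T := by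
  classical
  set φ : (Fin n → ℝ) →ₗ[ℝ] (Fin n → ℝ) := A.mulVecLin with hφ
  have htor : Module.IsTorsion ℝ[X] (Module.AEval' φ) :=
    Module.AEval.isTorsion_of_finiteDimensional ℝ (Fin n → ℝ) φ
  obtain ⟨ι, fι, p, hp, e, ⟨eqv⟩⟩ := Module.equiv_directSum_of_isTorsion htor
  haveI := fι
  have hgood : HasGoodForm (Module.AEval' φ) := by
    refine HasGoodForm.of_equiv eqv (hasGoodForm_directSum _ fun i => ?_)
    have hpi0 : p i ≠ 0 := (hp i).ne_zero
    set q : ℝ[X] := (p i * C (p i).leadingCoeff⁻¹) ^ (e i) with hqdef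
    have hqm : q.Monic := (monic_mul_leadingCoeff_inv hpi0).pow _
    have hassoc : Associated (p i ^ e i) q := by
      refine Associated.pow_pow ?_
      exact associated_mul_unit_right _ _ (isUnit_C.mpr
        (isUnit_iff_ne_zero.mpr (inv_ne_zero (leadingCoeff_ne_zero.mpr hpi0))))
    have hspan : (ℝ[X] ∙ p i ^ e i) = Ideal.span {q} := by
      rw [Ideal.submodule_span_eq, Ideal.span_singleton_eq_span_singleton.mpr hassoc]
    exact (hasGoodForm_quotient q hqm).of_equiv (Submodule.quotEquivOfEq _ _ hspan)
  obtain ⟨B, hsymm, hnd, hX⟩ := hgood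
  set B₀ : (Fin n → ℝ) →ₗ[ℝ] (Fin n → ℝ) →ₗ[ℝ] ℝ :=
    B.compl₁₂ (Module.AEval'.of φ).toLinearMap (Module.AEval'.of φ).toLinearMap with hB₀
  have hB₀app : ∀ v w, B₀ v w = B (Module.AEval'.of φ v) (Module.AEval'.of φ w) :=
    fun v w => rfl
  have hkey : ∀ v w, B₀ (A.mulVec v) w = B₀ v (A.mulVec w) := by
    intro v w
    rw [hB₀app, hB₀app]
    have h1 : Module.AEval'.of φ (A.mulVec v) = (X : ℝ[X]) • Module.AEval'.of φ v := by
      rw [Module.AEval'.X_smul_of]; rfl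
    have h2 : Module.AEval'.of φ (A.mulVec w) = (X : ℝ[X]) • Module.AEval'.of φ w := by
      rw [Module.AEval'.X_smul_of]; rfl
    rw [h1, h2]
    exact hX _ _
  have hB₀symm : ∀ v w, B₀ v w = B₀ w v := fun v w => by rw [hB₀app, hB₀app]; exact hsymm _ _
  have hB₀nd : ∀ v, (∀ w, B₀ v w = 0) → v = 0 := by
    intro v hv
    have : Module.AEval'.of φ v = 0 := by
      refine hnd _ fun y => ?_
      have := hv ((Module.AEval'.of φ).symm y)
      rwa [hB₀app, LinearEquiv.apply_symm_apply] at this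
    simpa using congrArg (Module.AEval'.of φ).symm this
  set T := LinearMap.toMatrix₂' ℝ B₀ with hT
  have hB₀T : ∀ v w, B₀ v w = v ⬝ᵥ T *ᵥ w := by
    intro v w
    calc B₀ v w = Matrix.toLinearMap₂' ℝ T v w := by
          rw [hT, Matrix.toLinearMap₂'_toMatrix']
      _ = v ⬝ᵥ T *ᵥ w := Matrix.toLinearMap₂'_apply' _ _ _
  have hTentry : ∀ i j, T i j = B₀ (Pi.single i 1) (Pi.single j 1) := fun i j => by
    rw [hT, LinearMap.toMatrix₂'_apply]
  have hTsymm : T.IsSymm := by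
    ext i j
    rw [Matrix.transpose_apply, hTentry, hTentry]
    exact hB₀symm _ _
  have hsingle : ∀ (M : Matrix (Fin n) (Fin n) ℝ) (i j : Fin n),
      Pi.single i (1:ℝ) ⬝ᵥ M *ᵥ Pi.single j 1 = M i j := by
    intro M i j
    simp [dotProduct, Matrix.mulVec, Pi.single_apply, Finset.sum_ite_eq,
      Finset.mul_sum]
  have hmat : Aᵀ * T = T * A := by
    ext i j
    have h := hkey (Pi.single i 1) (Pi.single j 1)
    rw [hB₀T, hB₀T] at h
    calc (Aᵀ * T) i j = Pi.single i 1 ⬝ᵥ (Aᵀ * T) *ᵥ Pi.single j 1 := (hsingle _ i j).symm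
      _ = (A *ᵥ Pi.single i 1) ⬝ᵥ T *ᵥ Pi.single j 1 := by
          rw [← Matrix.mulVec_mulVec, Matrix.dotProduct_mulVec, Matrix.vecMul_transpose]
      _ = Pi.single i 1 ⬝ᵥ T *ᵥ (A *ᵥ Pi.single j 1) := h
      _ = Pi.single i 1 ⬝ᵥ (T * A) *ᵥ Pi.single j 1 := by rw [← Matrix.mulVec_mulVec]
      _ = (T * A) i j := hsingle _ i j
  have hTnd : T.Nondegenerate := by
    rw [Matrix.nondegenerate_iff_separatingLeft, Matrix.separatingLeft_def]
    intro v hv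
    refine hB₀nd v fun w => ?_
    rw [hB₀T]; exact hv w
  have hTdet : T.det ≠ 0 := Matrix.nondegenerate_iff_det_ne_zero.mp hTnd
  have hTunit : IsUnit T := (Matrix.isUnit_iff_isUnit_det T).mpr (isUnit_iff_ne_zero.mpr hTdet)
  have hTdet' : IsUnit T.det := isUnit_iff_ne_zero.mpr hTdet
  refine ⟨A * T⁻¹, T, ?_, hTsymm, hTunit, ?_⟩
  · show (A * T⁻¹)ᵀ = A * T⁻¹
    have hTinv : (T⁻¹)ᵀ = T⁻¹ := by
      rw [Matrix.transpose_nonsing_inv, hTsymm.eq]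
    rw [Matrix.transpose_mul, hTinv]
    have : T⁻¹ * (Aᵀ * T) * T⁻¹ = T⁻¹ * (T * A) * T⁻¹ := by rw [hmat]
    calc T⁻¹ * Aᵀ = T⁻¹ * Aᵀ * (T * T⁻¹) := by
          rw [Matrix.mul_nonsing_inv T hTdet', Matrix.mul_one]
      _ = T⁻¹ * (Aᵀ * T) * T⁻¹ := by
          rw [Matrix.mul_assoc, Matrix.mul_assoc, Matrix.mul_assoc]
      _ = T⁻¹ * (T * A) * T⁻¹ := this
      _ = (T⁻¹ * T) * A * T⁻¹ := by rw [Matrix.mul_assoc T⁻¹ T A]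
      _ = A * T⁻¹ := by rw [Matrix.nonsing_inv_mul T hTdet', Matrix.one_mul]
  · rw [Matrix.mul_assoc, Matrix.nonsing_inv_mul T hTdet', Matrix.mul_one]
end

section
/- Assume the system is externally symmetric with signature Σ, and let Q ⪰ 0 and R ≻ 0. Then the linear operator −R^{1/2}∘𝒮∘R^{−1/2} on L²(0,t_f;ℝ^m) is non-negative: for every u ∈ L²(0,t_f;ℝ^m), ⟨u, −R^{1/2}(𝒮(R^{−1/2}u))⟩_{t_f} ≥ 0. -/
open MeasureTheory Matrix Filter
open scoped ENNReal
open scoped MatrixOrder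

namespace NRSRaux

/-- entrywise ℓ¹ norm -/
noncomputable def mN {m : ℕ} (M : Matrix (Fin m) (Fin m) ℝ) : ℝ := ∑ i, ∑ j, |M i j|

lemma mN_nonneg {m : ℕ} (M : Matrix (Fin m) (Fin m) ℝ) : 0 ≤ mN M :=
  Finset.sum_nonneg fun _ _ => Finset.sum_nonneg fun _ _ => abs_nonneg _

lemma mulVec_norm_le {m : ℕ} (M : Matrix (Fin m) (Fin m) ℝ) (x : Fin m → ℝ) :
    ‖M *ᵥ x‖ ≤ mN M * ‖x‖ := by
  rw [pi_norm_le_iff_of_nonneg (mul_nonneg (mN_nonneg M) (norm_nonneg x))]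
  intro i
  calc ‖(M *ᵥ x) i‖ = |∑ j, M i j * x j| := by
        simp [Matrix.mulVec, dotProduct, Real.norm_eq_abs]
    _ ≤ ∑ j, |M i j * x j| := Finset.abs_sum_le_sum_abs _ _
    _ ≤ ∑ j, |M i j| * ‖x‖ := by
        refine Finset.sum_le_sum fun j _ => ?_
        rw [abs_mul]
        exact mul_le_mul_of_nonneg_left ((Real.norm_eq_abs _) ▸ norm_le_pi_norm x j) (abs_nonneg _)
    _ = (∑ j, |M i j|) * ‖x‖ := (Finset.sum_mul _ _ _).symm
    _ ≤ mN M * ‖x‖ := by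
        refine mul_le_mul_of_nonneg_right ?_ (norm_nonneg x)
        exact Finset.single_le_sum (f := fun i => ∑ j, |M i j|)
          (fun i _ => Finset.sum_nonneg fun j _ => abs_nonneg _) (Finset.mem_univ i)

lemma abs_dot_le {m : ℕ} (x y : Fin m → ℝ) : |x ⬝ᵥ y| ≤ (m : ℝ) * (‖x‖ * ‖y‖) := by
  calc |x ⬝ᵥ y| ≤ ∑ i, |x i * y i| := Finset.abs_sum_le_sum_abs _ _
    _ ≤ ∑ _i : Fin m, ‖x‖ * ‖y‖ := by
        refine Finset.sum_le_sum fun i _ => ?_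
        rw [abs_mul]
        exact mul_le_mul ((Real.norm_eq_abs _) ▸ norm_le_pi_norm x i)
          ((Real.norm_eq_abs _) ▸ norm_le_pi_norm y i) (abs_nonneg _) (norm_nonneg _)
    _ = (m : ℝ) * (‖x‖ * ‖y‖) := by simp [Finset.sum_const, Finset.card_univ]

lemma dot_self_nonneg {m : ℕ} (x : Fin m → ℝ) : 0 ≤ x ⬝ᵥ x :=
  Finset.sum_nonneg fun i _ => mul_self_nonneg _

lemma norm_sq_le_dot {m : ℕ} (x : Fin m → ℝ) : ‖x‖ ^ 2 ≤ x ⬝ᵥ x := by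
  have h1 : ‖x‖ ≤ Real.sqrt (x ⬝ᵥ x) := by
    rw [pi_norm_le_iff_of_nonneg (Real.sqrt_nonneg _)]
    intro i
    rw [Real.norm_eq_abs, show |x i| = Real.sqrt ((x i)^2) by rw [Real.sqrt_sq_eq_abs]]
    refine Real.sqrt_le_sqrt ?_
    rw [pow_two]
    exact Finset.single_le_sum (f := fun j => x j * x j)
      (fun j _ => mul_self_nonneg _) (Finset.mem_univ i)
  calc ‖x‖^2 ≤ (Real.sqrt (x ⬝ᵥ x))^2 := by
        exact pow_le_pow_left₀ (norm_nonneg _) h1 2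
    _ = x ⬝ᵥ x := Real.sq_sqrt (dot_self_nonneg x)

set_option maxHeartbeats 1000000 in
lemma cont_g {n m : ℕ} (A : Matrix (Fin n) (Fin n) ℝ) (B : Matrix (Fin n) (Fin m) ℝ)
    (C : Matrix (Fin m) (Fin n) ℝ) : Continuous (fun t : ℝ => C * mexp A t * B) := by
  letI : NormedRing (Matrix (Fin n) (Fin n) ℝ) := Matrix.linftyOpNormedRing
  letI : NormedAlgebra ℝ (Matrix (Fin n) (Fin n) ℝ) := Matrix.linftyOpNormedAlgebra
  letI : NormedAlgebra ℚ (Matrix (Fin n) (Fin n) ℝ) := Matrix.linftyOpNormedAlgebra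
  letI : CompleteSpace (Matrix (Fin n) (Fin n) ℝ) := FiniteDimensional.complete ℝ _
  have h1 : Continuous (fun t : ℝ => mexp A t) :=
    NormedSpace.exp_continuous.comp (continuous_id.smul continuous_const)
  exact (continuous_const.matrix_mul h1).matrix_mul continuous_const

set_option maxHeartbeats 1000000 in
lemma cont_mN_g {n m : ℕ} (A : Matrix (Fin n) (Fin n) ℝ) (B : Matrix (Fin n) (Fin m) ℝ)
    (C : Matrix (Fin m) (Fin n) ℝ) : Continuous (fun t : ℝ => mN (C * mexp A t * B)) := by
  unfold mN
  refine continuous_finset_sum _ fun i _ => continuous_finset_sum _ fun j _ => ?_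
  exact ((continuous_apply j).comp ((continuous_apply i).comp (cont_g A B C))).abs

/-- dot product with a fixed vector, as a CLM -/
noncomputable def dotCLM {m : ℕ} (a : Fin m → ℝ) : (Fin m → ℝ) →L[ℝ] ℝ :=
  LinearMap.toContinuousLinearMap
    { toFun := fun y => a ⬝ᵥ y
      map_add' := fun x y => by
        simp [dotProduct, mul_add, Finset.sum_add_distrib]
      map_smul' := fun c x => by
        simp only [RingHom.id_apply, smul_eq_mul, dotProduct, Pi.smul_apply,
          Finset.mul_sum]
        exact Finset.sum_congr rfl fun i _ => by ring }

@[simp] lemma dotCLM_apply {m : ℕ} (a y : Fin m → ℝ) : dotCLM a y = a ⬝ᵥ y := rfl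

lemma aesm_mulVec {m : ℕ} {α : Type*} [MeasurableSpace α] {μ : MeasureTheory.Measure α}
    {M : α → Matrix (Fin m) (Fin m) ℝ} {x : α → Fin m → ℝ}
    (hM : MeasureTheory.AEStronglyMeasurable M μ) (hx : MeasureTheory.AEStronglyMeasurable x μ) :
    MeasureTheory.AEStronglyMeasurable (fun a => M a *ᵥ x a) μ := by
  have hc : Continuous (fun q : Matrix (Fin m) (Fin m) ℝ × (Fin m → ℝ) => q.1 *ᵥ q.2) :=
    continuous_fst.matrix_mulVec continuous_snd
  exact hc.comp_aestronglyMeasurable (hM.prodMk hx)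

lemma aesm_dot {m : ℕ} {α : Type*} [MeasurableSpace α] {μ : MeasureTheory.Measure α}
    {x y : α → Fin m → ℝ}
    (hx : MeasureTheory.AEStronglyMeasurable x μ) (hy : MeasureTheory.AEStronglyMeasurable y μ) :
    MeasureTheory.AEStronglyMeasurable (fun a => x a ⬝ᵥ y a) μ := by
  have hc : Continuous (fun q : (Fin m → ℝ) × (Fin m → ℝ) => q.1 ⬝ᵥ q.2) := by
    unfold dotProduct
    exact continuous_finset_sum _ fun i _ =>
      ((continuous_apply i).comp continuous_fst).mul ((continuous_apply i).comp continuous_snd)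
  exact hc.comp_aestronglyMeasurable (hx.prodMk hy)

end NRSRaux
set_option maxHeartbeats 2000000 in
/-- for an externally symmetric system, the operator
−R^{1/2}∘𝒮∘R^{−1/2} is non-negative on L²(0,t_f;ℝ^m). -/
theorem neg_RSR_nonneg {n m : ℕ} (tf : ℝ) (htf : 0 < tf)
    (A : Matrix (Fin n) (Fin n) ℝ) (B : Matrix (Fin n) (Fin m) ℝ)
    (C : Matrix (Fin m) (Fin n) ℝ) (D : Matrix (Fin m) (Fin m) ℝ)
    (Sg Q R : Matrix (Fin m) (Fin m) ℝ)
    (hSg : IsSignature Sg) (hsym : ExtSym A B C D Sg)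
    (hQ : Q.PosSemidef) (hR : R.PosDef)
    (u : ℝ → Fin m → ℝ) (hu : MemL2 tf u) :
    0 ≤ l2ip tf u (fun t =>
      -((CFC.sqrt R).mulVec
        (SOp A B C D Sg Q R tf (fun s => (CFC.sqrt R)⁻¹.mulVec (u s)) t))) := by
  classical
  letI : TopologicalSpace.PseudoMetrizableSpace (Matrix (Fin m) (Fin m) ℝ) :=
    (inferInstance : TopologicalSpace.PseudoMetrizableSpace (Fin m → Fin m → ℝ))
  obtain ⟨hgsym, hDsym⟩ := hsym
  set I : Set ℝ := Set.Ioc (0:ℝ) tf with hIdef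
  have hIoc : MeasurableSet I := measurableSet_Ioc
  set g : ℝ → Matrix (Fin m) (Fin m) ℝ := fun s => C * mexp A s * B with hg
  set P : Matrix (Fin m) (Fin m) ℝ := (CFC.sqrt R)⁻¹ with hP
  set w : ℝ → Fin m → ℝ := fun s => P.mulVec (u s) with hw
  set conv : ℝ → Fin m → ℝ := fun σ => ∫ τ in (0:ℝ)..σ, g (σ - τ) *ᵥ w τ with hconv
  set v : ℝ → Fin m → ℝ := fun σ => Gop A B C D w σ with hv
  set G : ℝ × ℝ → ℝ := fun p => (g (p.2 - p.1) *ᵥ w p.1) ⬝ᵥ (Q *ᵥ v p.2) with hG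
  set F : ℝ × ℝ → ℝ := fun p => if p.1 < p.2 then G p else 0 with hF
  -- basic definitional equations
  have hgc : Continuous g := by rw [hg]; exact NRSRaux.cont_g A B C
  have hGopEq : ∀ (uu : ℝ → Fin m → ℝ) (s : ℝ),
      Gop A B C D uu s = (∫ τ in (0:ℝ)..s, g (s - τ) *ᵥ uu τ) + D *ᵥ uu s := by
    intro uu s
    simp only [hg]
    rfl
  have hconveq : ∀ σ, conv σ = ∫ τ in (0:ℝ)..σ, g (σ - τ) *ᵥ w τ := by
    intro σ; simp only [hconv]
  have hveq : ∀ σ, v σ = conv σ + D *ᵥ w σ := by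
    intro σ
    simp only [hv, hconv, hg]
    rfl
  have hvGop : ∀ s, Gop A B C D w s = v s := by
    intro s; simp only [hv]
  -- matrix algebra facts
  have hsqrtT : (CFC.sqrt R)ᵀ = CFC.sqrt R := by
    have h := (Matrix.nonneg_iff_posSemidef.1 (CFC.sqrt_nonneg R)).1
    rwa [Matrix.IsHermitian, conjTranspose_eq_transpose_of_trivial] at h
  have hsq : CFC.sqrt R * CFC.sqrt R = R :=
    CFC.sqrt_mul_sqrt_self R (Matrix.nonneg_iff_posSemidef.2 hR.posSemidef)
  have hdet : IsUnit (CFC.sqrt R).det := by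
    have h2 : R.det ≠ 0 := hR.det_pos.ne'
    rw [← hsq, Matrix.det_mul] at h2
    exact ((mul_ne_zero_iff.mp h2).1).isUnit
  have hPR : CFC.sqrt R * R⁻¹ = P := by
    have h3 : R⁻¹ = (CFC.sqrt R)⁻¹ * (CFC.sqrt R)⁻¹ := by
      rw [← Matrix.mul_inv_rev, hsq]
    rw [hP, h3, ← Matrix.mul_assoc, Matrix.mul_nonsing_inv _ hdet, Matrix.one_mul]
  have hPT : Pᵀ = P := by
    rw [hP, Matrix.transpose_nonsing_inv, hsqrtT]
  have hPR' : ∀ t, u t ᵥ* (CFC.sqrt R * R⁻¹) = w t := by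
    intro t
    rw [hPR, ← Matrix.mulVec_transpose, hPT, hw]
  -- signature facts
  have hSS : Sg * Sg = 1 := by
    obtain ⟨d, hd, hSgd⟩ := hSg
    rw [hSgd, Matrix.diagonal_mul_diagonal]
    have hdd : (fun i => d i * d i) = fun _ => (1:ℝ) := by
      funext i
      rcases hd i with h | h <;> simp [h]
    rw [hdd]
    exact Matrix.diagonal_one
  have hgT : ∀ s : ℝ, 0 ≤ s → (g s)ᵀ = Sg * g s * Sg := by
    intro s hs
    have h : Sg * (g s)ᵀ = (g s) * Sg := hgsym s hs
    have h2 : Sg * (Sg * (g s)ᵀ) = Sg * (g s * Sg) := by rw [h]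
    rw [← Matrix.mul_assoc Sg Sg ((g s)ᵀ), hSS, Matrix.one_mul,
      ← Matrix.mul_assoc Sg (g s) Sg] at h2
    exact h2
  have hDT : Dᵀ = Sg * D * Sg := by
    have h2 : Sg * (Sg * Dᵀ) = Sg * (D * Sg) := by rw [hDsym]
    rw [← Matrix.mul_assoc Sg Sg Dᵀ, hSS, Matrix.one_mul,
      ← Matrix.mul_assoc Sg D Sg] at h2
    exact h2
  -- uniform bound on g over [-tf, tf]
  have hmnc : Continuous (fun s => NRSRaux.mN (g s)) := by
    simp only [hg]
    exact NRSRaux.cont_mN_g A B C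
  obtain ⟨Mg, hMgr⟩ :=
    (isCompact_Icc (a := -tf) (b := tf)).exists_bound_of_continuousOn hmnc.continuousOn
  have hMg' : ∀ s ∈ Set.Icc (-tf) tf, NRSRaux.mN (g s) ≤ Mg := by
    intro s hs
    have := hMgr s hs
    rw [Real.norm_eq_abs] at this
    exact (le_abs_self _).trans this
  have hMg0 : 0 ≤ Mg :=
    le_trans (NRSRaux.mN_nonneg (g 0)) (hMg' 0 ⟨by linarith, htf.le⟩)
  -- basic integrability
  have h_one : IntegrableOn (fun _ : ℝ => (1:ℝ)) I := by
    refine integrableOn_const ?_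
    rw [hIdef, Real.volume_Ioc]
    exact ENNReal.ofReal_ne_top
  have h_u_norm : IntegrableOn (fun t => ‖u t‖) I := by
    refine Integrable.mono' (h_one.add hu.2) hu.1.norm ?_
    filter_upwards with t
    simp only [Pi.add_apply]
    rw [Real.norm_eq_abs, abs_of_nonneg (norm_nonneg _)]
    rcases le_or_gt (‖u t‖) 1 with h | h
    · linarith [NRSRaux.dot_self_nonneg (u t)]
    · have h2 : ‖u t‖ ≤ ‖u t‖^2 := by nlinarith
      linarith [NRSRaux.norm_sq_le_dot (u t)]
  have hw_aesm : AEStronglyMeasurable w (volume.restrict I) := by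
    rw [hw]
    exact (continuous_const.matrix_mulVec continuous_id).comp_aestronglyMeasurable hu.1
  have h_w_norm : IntegrableOn (fun t => ‖w t‖) I := by
    refine Integrable.mono' (h_u_norm.const_mul (NRSRaux.mN P)) hw_aesm.norm ?_
    filter_upwards with t
    rw [Real.norm_eq_abs, abs_of_nonneg (norm_nonneg _), hw]
    exact NRSRaux.mulVec_norm_le P (u t)
  have h_w_sq : IntegrableOn (fun t => ‖w t‖ * ‖w t‖) I := by
    refine Integrable.mono' (hu.2.const_mul ((NRSRaux.mN P) * (NRSRaux.mN P)))
      (hw_aesm.norm.mul hw_aesm.norm) ?_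
    filter_upwards with t
    rw [Real.norm_eq_abs, abs_of_nonneg (mul_nonneg (norm_nonneg _) (norm_nonneg _))]
    have h1 : ‖w t‖ ≤ NRSRaux.mN P * ‖u t‖ := by
      rw [hw]; exact NRSRaux.mulVec_norm_le P (u t)
    have h2 := NRSRaux.norm_sq_le_dot (u t)
    rw [pow_two] at h2
    nlinarith [norm_nonneg (w t), norm_nonneg (u t), NRSRaux.mN_nonneg P]
  set Kc : ℝ := Mg * ∫ t in I, ‖w t‖ with hKc
  have hKc0 : 0 ≤ Kc :=
    mul_nonneg hMg0 (setIntegral_nonneg hIoc fun t _ => norm_nonneg _)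
  -- integrability of the convolution integrand
  have hconvInt : ∀ σ ∈ I, IntegrableOn (fun τ => g (σ - τ) *ᵥ w τ) (Set.Ioc 0 σ) := by
    intro σ hσ
    have hsub : Set.Ioc (0:ℝ) σ ⊆ I := Set.Ioc_subset_Ioc_right hσ.2
    refine Integrable.mono' ((h_w_norm.mono_set hsub).const_mul Mg)
      (NRSRaux.aesm_mulVec ((hgc.comp (continuous_const.sub continuous_id)).aestronglyMeasurable)
        (hw_aesm.mono_measure (Measure.restrict_mono hsub le_rfl))) ?_
    filter_upwards [ae_restrict_mem measurableSet_Ioc] with τ hτ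
    refine (NRSRaux.mulVec_norm_le _ _).trans (mul_le_mul_of_nonneg_right ?_ (norm_nonneg _))
    exact hMg' _ ⟨by linarith [hτ.2, htf.le], by linarith [hσ.2, hτ.1]⟩
  have hconv_bound : ∀ σ ∈ I, ‖conv σ‖ ≤ Kc := by
    intro σ hσ
    have hsub : Set.Ioc (0:ℝ) σ ⊆ I := Set.Ioc_subset_Ioc_right hσ.2
    calc ‖conv σ‖ = ‖∫ τ in Set.Ioc 0 σ, g (σ - τ) *ᵥ w τ‖ := by
          rw [hconveq σ, intervalIntegral.integral_of_le hσ.1.le]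
      _ ≤ ∫ τ in Set.Ioc 0 σ, ‖g (σ - τ) *ᵥ w τ‖ := norm_integral_le_integral_norm _
      _ ≤ ∫ τ in Set.Ioc 0 σ, Mg * ‖w τ‖ := by
          refine integral_mono_of_nonneg ?_ ((h_w_norm.mono_set hsub).const_mul Mg) ?_
          · filter_upwards with τ using norm_nonneg _
          · filter_upwards [ae_restrict_mem measurableSet_Ioc] with τ hτ
            refine (NRSRaux.mulVec_norm_le _ _).trans
              (mul_le_mul_of_nonneg_right ?_ (norm_nonneg _))
            exact hMg' _ ⟨by linarith [hτ.2, htf.le], by linarith [hσ.2, hτ.1]⟩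
      _ ≤ ∫ τ in I, Mg * ‖w τ‖ := by
          refine setIntegral_mono_set (h_w_norm.const_mul Mg) ?_ hsub.eventuallyLE
          filter_upwards with τ
          exact mul_nonneg hMg0 (norm_nonneg _)
      _ = Kc := by rw [hKc, integral_const_mul]
  -- measurability of conv and v
  have hconv_aesm : AEStronglyMeasurable conv (volume.restrict I) := by
    have hinner : AEStronglyMeasurable (fun p : ℝ × ℝ => g (p.1 - p.2) *ᵥ w p.2)
        ((volume.restrict I).prod (volume.restrict I)) :=
      NRSRaux.aesm_mulVec ((hgc.comp (continuous_fst.sub continuous_snd)).aestronglyMeasurable)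
        hw_aesm.comp_snd
    have hK_aesm : AEStronglyMeasurable
        (fun p : ℝ × ℝ => if p.2 ≤ p.1 then g (p.1 - p.2) *ᵥ w p.2 else 0)
        ((volume.restrict I).prod (volume.restrict I)) := by
      have hs : MeasurableSet {p : ℝ × ℝ | p.2 ≤ p.1} :=
        measurableSet_le measurable_snd measurable_fst
      have heq : (fun p : ℝ × ℝ => if p.2 ≤ p.1 then g (p.1 - p.2) *ᵥ w p.2 else 0)
          = {p : ℝ × ℝ | p.2 ≤ p.1}.indicator (fun p => g (p.1 - p.2) *ᵥ w p.2) := by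
        funext p
        simp [Set.indicator_apply, Set.mem_setOf_eq]
      rw [heq]
      exact hinner.indicator hs
    have hform : AEStronglyMeasurable
        (fun σ => ∫ τ in I, (if τ ≤ σ then g (σ - τ) *ᵥ w τ else 0)) (volume.restrict I) :=
      hK_aesm.integral_prod_right'
    refine hform.congr ?_
    filter_upwards [ae_restrict_mem hIoc] with σ hσ
    have h0 : (fun τ => if τ ≤ σ then g (σ - τ) *ᵥ w τ else 0)
        = fun τ => (Set.Iic σ).indicator (fun τ' => g (σ - τ') *ᵥ w τ') τ := by
      funext τ
      simp [Set.indicator_apply, Set.mem_Iic]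
    have h1 : (∫ τ in I, (if τ ≤ σ then g (σ - τ) *ᵥ w τ else 0))
        = ∫ τ in I ∩ Set.Iic σ, g (σ - τ) *ᵥ w τ := by
      rw [h0, setIntegral_indicator measurableSet_Iic]
    have h2 : I ∩ Set.Iic σ = Set.Ioc 0 σ := by
      rw [hIdef]
      ext τ
      simp only [Set.mem_inter_iff, Set.mem_Ioc, Set.mem_Iic]
      constructor
      · rintro ⟨⟨ha, _⟩, hc⟩; exact ⟨ha, hc⟩
      · rintro ⟨ha, hc⟩; exact ⟨⟨ha, le_trans hc hσ.2⟩, hc⟩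
    rw [h1, h2, hconveq σ, intervalIntegral.integral_of_le hσ.1.le]
  have hv_aesm : AEStronglyMeasurable v (volume.restrict I) := by
    have hveq' : v = fun σ => conv σ + D *ᵥ w σ := funext hveq
    rw [hveq']
    exact hconv_aesm.add
      ((continuous_const.matrix_mulVec continuous_id).comp_aestronglyMeasurable hw_aesm)
  have hv_bound : ∀ σ ∈ I, ‖v σ‖ ≤ Kc + NRSRaux.mN D * ‖w σ‖ := by
    intro σ hσ
    rw [hveq σ]
    exact (norm_add_le _ _).trans
      (add_le_add (hconv_bound σ hσ) (NRSRaux.mulVec_norm_le D (w σ)))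
  have hv_norm_int : IntegrableOn (fun σ => ‖v σ‖) I := by
    refine Integrable.mono' ((h_one.const_mul Kc).add (h_w_norm.const_mul (NRSRaux.mN D)))
      hv_aesm.norm ?_
    filter_upwards [ae_restrict_mem hIoc] with σ hσ
    simp only [Pi.add_apply]
    rw [Real.norm_eq_abs, abs_of_nonneg (norm_nonneg _)]
    have := hv_bound σ hσ
    linarith
  have hwv_int : IntegrableOn (fun σ => ‖w σ‖ * ‖v σ‖) I := by
    refine Integrable.mono' ((h_w_norm.const_mul Kc).add (h_w_sq.const_mul (NRSRaux.mN D)))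
      (hw_aesm.norm.mul hv_aesm.norm) ?_
    filter_upwards [ae_restrict_mem hIoc] with σ hσ
    simp only [Pi.add_apply]
    rw [Real.norm_eq_abs, abs_of_nonneg (mul_nonneg (norm_nonneg _) (norm_nonneg _))]
    have h1 := hv_bound σ hσ
    nlinarith [norm_nonneg (w σ), norm_nonneg (v σ), NRSRaux.mN_nonneg D,
      mul_le_mul_of_nonneg_left h1 (norm_nonneg (w σ))]
  -- interval integrability of the inner kernel
  have hfInt : ∀ t ∈ I, IntervalIntegrable
      (fun σ => g (σ - t) *ᵥ (Sg *ᵥ (Q *ᵥ v σ))) volume t tf := by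
    intro t ht
    rw [intervalIntegrable_iff_integrableOn_Ioc_of_le ht.2]
    have hsub : Set.Ioc t tf ⊆ I := Set.Ioc_subset_Ioc_left ht.1.le
    refine Integrable.mono'
      ((hv_norm_int.mono_set hsub).const_mul (Mg * (NRSRaux.mN Sg * NRSRaux.mN Q))) ?_ ?_
    · refine NRSRaux.aesm_mulVec
        ((hgc.comp (continuous_id.sub continuous_const)).aestronglyMeasurable) ?_
      have hc : Continuous fun y : Fin m → ℝ => Sg *ᵥ (Q *ᵥ y) :=
        continuous_const.matrix_mulVec (continuous_const.matrix_mulVec continuous_id)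
      exact hc.comp_aestronglyMeasurable (hv_aesm.mono_measure (Measure.restrict_mono hsub le_rfl))
    · filter_upwards [ae_restrict_mem measurableSet_Ioc] with σ hσ
      have h1 : NRSRaux.mN (g (σ - t)) ≤ Mg :=
        hMg' _ ⟨by linarith [hσ.1, ht.1, htf.le], by linarith [hσ.2, ht.1]⟩
      calc ‖g (σ - t) *ᵥ (Sg *ᵥ (Q *ᵥ v σ))‖
          ≤ NRSRaux.mN (g (σ - t)) * ‖Sg *ᵥ (Q *ᵥ v σ)‖ := NRSRaux.mulVec_norm_le _ _
        _ ≤ Mg * (NRSRaux.mN Sg * (NRSRaux.mN Q * ‖v σ‖)) := by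
            refine mul_le_mul h1 ?_ (norm_nonneg _) hMg0
            exact (NRSRaux.mulVec_norm_le _ _).trans
              (mul_le_mul_of_nonneg_left (NRSRaux.mulVec_norm_le _ _) (NRSRaux.mN_nonneg _))
        _ = (Mg * (NRSRaux.mN Sg * NRSRaux.mN Q)) * ‖v σ‖ := by ring
  -- integrability of G and F on the product
  have hG_aesm : AEStronglyMeasurable G ((volume.restrict I).prod (volume.restrict I)) := by
    rw [hG]
    refine NRSRaux.aesm_dot (NRSRaux.aesm_mulVec ?_ hw_aesm.comp_fst) ?_
    · exact (hgc.comp (continuous_snd.sub continuous_fst)).aestronglyMeasurable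
    · exact (continuous_const.matrix_mulVec continuous_id).comp_aestronglyMeasurable hv_aesm.comp_snd
  have hprodae : ∀ᵐ p ∂((volume.restrict I).prod (volume.restrict I)), p ∈ I ×ˢ I := by
    rw [Measure.prod_restrict]
    exact ae_restrict_mem (hIoc.prod hIoc)
  have hG_int : Integrable G ((volume.restrict I).prod (volume.restrict I)) := by
    refine Integrable.mono'
      ((h_w_norm.mul_prod hv_norm_int).const_mul ((m:ℝ) * Mg * NRSRaux.mN Q)) hG_aesm ?_
    filter_upwards [hprodae] with p hp
    obtain ⟨hp1, hp2⟩ := hp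
    have hmem : p.2 - p.1 ∈ Set.Icc (-tf) tf :=
      ⟨by linarith [hp2.1, hp1.2], by linarith [hp2.2, hp1.1]⟩
    calc ‖G p‖ = |(g (p.2 - p.1) *ᵥ w p.1) ⬝ᵥ (Q *ᵥ v p.2)| := by rw [hG, Real.norm_eq_abs]
      _ ≤ (m:ℝ) * (‖g (p.2 - p.1) *ᵥ w p.1‖ * ‖Q *ᵥ v p.2‖) := NRSRaux.abs_dot_le _ _
      _ ≤ (m:ℝ) * ((Mg * ‖w p.1‖) * (NRSRaux.mN Q * ‖v p.2‖)) := by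
          refine mul_le_mul_of_nonneg_left
            (mul_le_mul ?_ (NRSRaux.mulVec_norm_le _ _) (norm_nonneg _)
              (mul_nonneg hMg0 (norm_nonneg _))) (Nat.cast_nonneg m)
          exact (NRSRaux.mulVec_norm_le _ _).trans
            (mul_le_mul_of_nonneg_right (hMg' _ hmem) (norm_nonneg _))
      _ = ((m:ℝ) * Mg * NRSRaux.mN Q) * (‖w p.1‖ * ‖v p.2‖) := by ring
  have hF_int : Integrable F ((volume.restrict I).prod (volume.restrict I)) := by
    have hs : MeasurableSet {p : ℝ × ℝ | p.1 < p.2} :=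
      measurableSet_lt measurable_fst measurable_snd
    have heq : F = {p : ℝ × ℝ | p.1 < p.2}.indicator G := by
      funext p
      rw [hF]
      simp [Set.indicator_apply, Set.mem_setOf_eq]
    rw [heq]
    exact hG_int.indicator hs
  have hF_unc : Integrable (Function.uncurry fun t σ => F (t, σ))
      ((volume.restrict I).prod (volume.restrict I)) := hF_int
  -- t-sections
  have keyF_t : ∀ t ∈ I, (∫ σ in I, F (t, σ)) = ∫ σ in Set.Ioc t tf, G (t, σ) := by
    intro t ht
    have h1 : (fun σ => F (t, σ)) = (Set.Ioi t).indicator (fun σ => G (t, σ)) := by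
      funext σ
      rw [hF]
      simp [Set.indicator_apply, Set.mem_Ioi]
    have h2 : I ∩ Set.Ioi t = Set.Ioc t tf := by
      rw [hIdef]
      ext σ
      simp only [Set.mem_inter_iff, Set.mem_Ioc, Set.mem_Ioi]
      constructor
      · rintro ⟨⟨_, hb⟩, hc⟩; exact ⟨hc, hb⟩
      · rintro ⟨hc, hb⟩; exact ⟨⟨lt_trans ht.1 hc, hb⟩, hc⟩
    rw [h1, setIntegral_indicator measurableSet_Ioi, h2]
  -- the pointwise identity in t
  have key2 : ∀ t ∈ I,
      u t ⬝ᵥ (-((CFC.sqrt R).mulVec (SOp A B C D Sg Q R tf w t)))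
        = (∫ σ in I, F (t, σ)) + (D *ᵥ w t) ⬝ᵥ (Q *ᵥ v t) := by
    intro t ht
    have hSOp2 : SOp A B C D Sg Q R tf w t
        = -(R⁻¹ *ᵥ (Sg *ᵥ (Gop A B C D (fun s => Sg *ᵥ (Q *ᵥ v (tf - s))) (tf - t)))) := by
      simp only [hv]
      rfl
    rw [hSOp2, Matrix.mulVec_neg, neg_neg, Matrix.mulVec_mulVec, Matrix.dotProduct_mulVec,
      hPR' t]
    simp only [hGopEq]
    rw [Matrix.mulVec_add, dotProduct_add]
    congr 1
    · -- integral part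
      have hint : (fun τ => g (tf - t - τ) *ᵥ (Sg *ᵥ (Q *ᵥ v (tf - τ))))
          = fun τ => (fun σ => g (σ - t) *ᵥ (Sg *ᵥ (Q *ᵥ v σ))) (tf - τ) := by
        funext τ
        show g (tf - t - τ) *ᵥ (Sg *ᵥ (Q *ᵥ v (tf - τ)))
            = g (tf - τ - t) *ᵥ (Sg *ᵥ (Q *ᵥ v (tf - τ)))
        rw [sub_right_comm]
      rw [hint, intervalIntegral.integral_comp_sub_left
        (fun σ => g (σ - t) *ᵥ (Sg *ᵥ (Q *ᵥ v σ))) tf, sub_sub_cancel, sub_zero]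
      rw [Matrix.dotProduct_mulVec]
      have hL := ((NRSRaux.dotCLM (w t ᵥ* Sg)).intervalIntegral_comp_comm (hfInt t ht)).symm
      simp only [NRSRaux.dotCLM_apply] at hL
      rw [hL]
      have hcong : (∫ σ in t..tf, (w t ᵥ* Sg) ⬝ᵥ (g (σ - t) *ᵥ (Sg *ᵥ (Q *ᵥ v σ))))
          = ∫ σ in t..tf, G (t, σ) := by
        refine intervalIntegral.integral_congr ?_
        intro σ hσ
        rw [Set.uIcc_of_le ht.2] at hσ
        show (w t ᵥ* Sg) ⬝ᵥ (g (σ - t) *ᵥ (Sg *ᵥ (Q *ᵥ v σ))) = G (t, σ)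
        have hst : (0:ℝ) ≤ σ - t := by linarith [hσ.1]
        rw [← Matrix.dotProduct_mulVec, Matrix.mulVec_mulVec, Matrix.mulVec_mulVec,
          show Sg * g (σ - t) * Sg = (g (σ - t))ᵀ from (hgT _ hst).symm,
          Matrix.dotProduct_mulVec, Matrix.vecMul_transpose]
      rw [hcong, intervalIntegral.integral_of_le ht.2]
      exact (keyF_t t ht).symm
    · -- D part
      have h1 : Sg *ᵥ (Q *ᵥ v (tf - (tf - t))) = Sg *ᵥ (Q *ᵥ v t) := by
        rw [sub_sub_cancel]
      rw [h1, Matrix.mulVec_mulVec, Matrix.mulVec_mulVec, ← hDT,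
        Matrix.dotProduct_mulVec, Matrix.vecMul_transpose]
  -- the pointwise identity in σ
  have key3 : ∀ σ ∈ I, (∫ t in I, F (t, σ)) = (v σ - D *ᵥ w σ) ⬝ᵥ (Q *ᵥ v σ) := by
    intro σ hσ
    have h1 : (fun t => F (t, σ)) = (Set.Iio σ).indicator (fun t => G (t, σ)) := by
      funext t
      rw [hF]
      simp [Set.indicator_apply, Set.mem_Iio]
    rw [h1, setIntegral_indicator measurableSet_Iio]
    have h2 : I ∩ Set.Iio σ = Set.Ioo 0 σ := by
      rw [hIdef]
      ext τ
      simp only [Set.mem_inter_iff, Set.mem_Ioc, Set.mem_Iio, Set.mem_Ioo]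
      constructor
      · rintro ⟨⟨ha, _⟩, hc⟩; exact ⟨ha, hc⟩
      · rintro ⟨ha, hc⟩; exact ⟨⟨ha, le_trans hc.le hσ.2⟩, hc⟩
    rw [h2, ← integral_Ioc_eq_integral_Ioo]
    have hc1 : (fun t => G (t, σ)) = fun t => NRSRaux.dotCLM (Q *ᵥ v σ) (g (σ - t) *ᵥ w t) := by
      funext t
      rw [NRSRaux.dotCLM_apply, hG]
      exact dotProduct_comm _ _
    calc (∫ t in Set.Ioc 0 σ, G (t, σ))
        = NRSRaux.dotCLM (Q *ᵥ v σ) (∫ t in Set.Ioc 0 σ, g (σ - t) *ᵥ w t) := by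
          rw [hc1]
          exact (NRSRaux.dotCLM (Q *ᵥ v σ)).integral_comp_comm (hconvInt σ hσ)
      _ = (v σ - D *ᵥ w σ) ⬝ᵥ (Q *ᵥ v σ) := by
          rw [NRSRaux.dotCLM_apply, ← intervalIntegral.integral_of_le hσ.1.le,
            dotProduct_comm]
          congr 1
          rw [← hconveq σ, hveq σ, add_sub_cancel_right]
  -- final integrability of the two summands
  have hint_b : IntegrableOn (fun t => (D *ᵥ w t) ⬝ᵥ (Q *ᵥ v t)) I := by
    refine Integrable.mono' (hwv_int.const_mul ((m:ℝ) * NRSRaux.mN D * NRSRaux.mN Q))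
      (NRSRaux.aesm_dot
        ((continuous_const.matrix_mulVec continuous_id).comp_aestronglyMeasurable hw_aesm)
        ((continuous_const.matrix_mulVec continuous_id).comp_aestronglyMeasurable hv_aesm)) ?_
    filter_upwards with t
    rw [Real.norm_eq_abs]
    calc |(D *ᵥ w t) ⬝ᵥ (Q *ᵥ v t)|
        ≤ (m:ℝ) * (‖D *ᵥ w t‖ * ‖Q *ᵥ v t‖) := NRSRaux.abs_dot_le _ _
      _ ≤ (m:ℝ) * ((NRSRaux.mN D * ‖w t‖) * (NRSRaux.mN Q * ‖v t‖)) := by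
          refine mul_le_mul_of_nonneg_left
            (mul_le_mul (NRSRaux.mulVec_norm_le _ _) (NRSRaux.mulVec_norm_le _ _)
              (norm_nonneg _) (mul_nonneg (NRSRaux.mN_nonneg _) (norm_nonneg _)))
            (Nat.cast_nonneg m)
      _ = ((m:ℝ) * NRSRaux.mN D * NRSRaux.mN Q) * (‖w t‖ * ‖v t‖) := by ring
  have hint_a : IntegrableOn (fun σ => (v σ - D *ᵥ w σ) ⬝ᵥ (Q *ᵥ v σ)) I := by
    refine Integrable.mono' (hv_norm_int.const_mul ((m:ℝ) * Kc * NRSRaux.mN Q))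
      (NRSRaux.aesm_dot
        (hv_aesm.sub
          ((continuous_const.matrix_mulVec continuous_id).comp_aestronglyMeasurable hw_aesm))
        ((continuous_const.matrix_mulVec continuous_id).comp_aestronglyMeasurable hv_aesm)) ?_
    filter_upwards [ae_restrict_mem hIoc] with σ hσ
    rw [Real.norm_eq_abs]
    have hsubn : ‖v σ - D *ᵥ w σ‖ ≤ Kc := by
      rw [hveq σ, add_sub_cancel_right]
      exact hconv_bound σ hσ
    calc |(v σ - D *ᵥ w σ) ⬝ᵥ (Q *ᵥ v σ)|
        ≤ (m:ℝ) * (‖v σ - D *ᵥ w σ‖ * ‖Q *ᵥ v σ‖) := NRSRaux.abs_dot_le _ _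
      _ ≤ (m:ℝ) * (Kc * (NRSRaux.mN Q * ‖v σ‖)) := by
          refine mul_le_mul_of_nonneg_left
            (mul_le_mul hsubn (NRSRaux.mulVec_norm_le _ _) (norm_nonneg _) hKc0)
            (Nat.cast_nonneg m)
      _ = ((m:ℝ) * Kc * NRSRaux.mN Q) * ‖v σ‖ := by ring
  -- putting everything together
  have hmain : l2ip tf u (fun t =>
      -((CFC.sqrt R).mulVec (SOp A B C D Sg Q R tf w t)))
      = ∫ σ in I, v σ ⬝ᵥ (Q *ᵥ v σ) := by
    have hl2 : l2ip tf u (fun t =>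
        -((CFC.sqrt R).mulVec (SOp A B C D Sg Q R tf w t)))
        = ∫ t in I, ((∫ σ in I, F (t, σ)) + (D *ᵥ w t) ⬝ᵥ (Q *ᵥ v t)) :=
      setIntegral_congr_fun hIoc fun t ht => key2 t ht
    rw [hl2, integral_add hF_int.integral_prod_left hint_b]
    have hswap := MeasureTheory.integral_integral_swap (f := fun t σ => F (t, σ)) hF_unc
    rw [hswap]
    have h5 : (∫ σ in I, ∫ t in I, F (t, σ))
        = ∫ σ in I, (v σ - D *ᵥ w σ) ⬝ᵥ (Q *ᵥ v σ) :=
      setIntegral_congr_fun hIoc fun σ hσ => key3 σ hσ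
    rw [h5, ← integral_add hint_a hint_b]
    refine setIntegral_congr_fun hIoc fun σ _ => ?_
    rw [sub_dotProduct]
    ring
  rw [hmain]
  exact setIntegral_nonneg hIoc fun σ _ => by simpa using hQ.dotProduct_mulVec_nonneg (v σ)
end

section
/- Assume D = 0 and that every entry of ∫_0^∞ |C·exp(At)·B| dt is finite, and define the peak-to-peak gain ‖G‖_pk = ‖∫_0^∞ |C·exp(At)·B| dt‖_∞. Then for every t_f > 0 and every u ∈ L^m_∞(0,t_f), ‖𝒢u‖_{∞,t_f} ≤ ‖G‖_pk · ‖u‖_{∞,t_f}; that is, the finite-horizon L∞ gain of 𝒢 is bounded by the peak-to-peak gain. -/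
open MeasureTheory Matrix Filter
open scoped ENNReal

/-- The peak-to-peak gain ‖G‖_pk = ‖∫_0^∞ |C e^{At} B| dt‖_∞. -/
noncomputable def pkGain {n m : ℕ} (A : Matrix (Fin n) (Fin n) ℝ)
    (B : Matrix (Fin n) (Fin m) ℝ) (C : Matrix (Fin m) (Fin n) ℝ) : ℝ :=
  rowSumNorm (Matrix.of fun i j => ∫ t in Set.Ioi (0:ℝ), |(C * mexp A t * B) i j|)

lemma mexp_entry_continuous {n : ℕ} (A : Matrix (Fin n) (Fin n) ℝ) (i j : Fin n) :
    Continuous fun t : ℝ => mexp A t i j := by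
  letI : NormedRing (Matrix (Fin n) (Fin n) ℝ) := Matrix.linftyOpNormedRing
  letI : NormedAlgebra ℝ (Matrix (Fin n) (Fin n) ℝ) := Matrix.linftyOpNormedAlgebra
  letI : NormedAlgebra ℚ (Matrix (Fin n) (Fin n) ℝ) := NormedAlgebra.restrictScalars ℚ ℝ _
  have h1 : Continuous fun t : ℝ => NormedSpace.exp (t • A) :=
    NormedSpace.exp_continuous.comp (continuous_id.smul continuous_const)
  have hlin : Continuous fun M : Matrix (Fin n) (Fin n) ℝ => M i j :=
    LinearMap.continuous_of_finiteDimensional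
      ({ toFun := fun M : Matrix (Fin n) (Fin n) ℝ => M i j,
         map_add' := fun _ _ => rfl, map_smul' := fun _ _ => rfl } : _ →ₗ[ℝ] ℝ)
  exact hlin.comp h1


set_option maxHeartbeats 2000000 in
/-- with D = 0, the finite-horizon L∞ gain of 𝒢 is bounded by the
peak-to-peak gain: ‖𝒢u‖_{∞,t_f} ≤ ‖G‖_pk ‖u‖_{∞,t_f}. -/
theorem Linf_gain_le_pk {n m : ℕ}
    (A : Matrix (Fin n) (Fin n) ℝ) (B : Matrix (Fin n) (Fin m) ℝ)
    (C : Matrix (Fin m) (Fin n) ℝ)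
    (hfin : ∀ i j, IntegrableOn (fun t => |(C * mexp A t * B) i j|) (Set.Ioi 0))
    (tf : ℝ) (htf : 0 < tf) (u : ℝ → Fin m → ℝ) (hu : MemLinf tf u) :
    eLpNorm (Gop A B C 0 u) ⊤ (volume.restrict (Set.Ioc 0 tf))
      ≤ ENNReal.ofReal (pkGain A B C)
          * eLpNorm u ⊤ (volume.restrict (Set.Ioc 0 tf)) := by
  classical
  set μ := volume.restrict (Set.Ioc (0:ℝ) tf) with hμ
  set N := (eLpNorm u ⊤ μ).toReal with hNdef
  have hN0 : 0 ≤ N := ENNReal.toReal_nonneg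
  have hcont : ∀ (i j : Fin m), Continuous fun s : ℝ => (C * mexp A s * B) i j := by
    intro i j
    have hm : Continuous fun s : ℝ => mexp A s :=
      continuous_matrix fun k l => mexp_entry_continuous A k l
    exact ((continuous_const.matrix_mul hm).matrix_mul continuous_const).matrix_elem i j
  have hpk0 : 0 ≤ pkGain A B C := by
    unfold pkGain rowSumNorm
    exact Real.iSup_nonneg fun i => Finset.sum_nonneg fun j _ => abs_nonneg _
  have hrow : ∀ i : Fin m,
      (∑ j, ∫ s in Set.Ioi (0:ℝ), |(C * mexp A s * B) i j|) ≤ pkGain A B C := by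
    intro i
    unfold pkGain rowSumNorm
    have h1 : (∑ j, ∫ s in Set.Ioi (0:ℝ), |(C * mexp A s * B) i j|)
        = ∑ j, |(Matrix.of fun i j => ∫ s in Set.Ioi (0:ℝ), |(C * mexp A s * B) i j|) i j| := by
      refine Finset.sum_congr rfl fun j _ => ?_
      rw [Matrix.of_apply, abs_of_nonneg (integral_nonneg fun s => abs_nonneg _)]
    rw [h1]
    exact le_ciSup (f := fun i => ∑ j, |(Matrix.of fun i j =>
      ∫ s in Set.Ioi (0:ℝ), |(C * mexp A s * B) i j|) i j|)
      (Set.Finite.bddAbove (Set.finite_range _)) i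
  have hbd : ∀ᵐ τ ∂μ, ‖u τ‖ ≤ N := by
    filter_upwards [ae_le_eLpNormEssSup (f := u) (μ := μ)] with τ hτ
    have h2 : (‖u τ‖₊ : ℝ≥0∞).toReal ≤ (eLpNormEssSup u μ).toReal :=
      ENNReal.toReal_mono (by rw [← eLpNorm_exponent_top]; exact hu.2.ne) hτ
    simpa [hNdef, eLpNorm_exponent_top] using h2
  have key : ∀ t ∈ Set.Ioc (0:ℝ) tf, ‖Gop A B C 0 u t‖ ≤ pkGain A B C * N := by
    rintro t ⟨ht0, htf'⟩
    set ν := volume.restrict (Set.Ioc (0:ℝ) t) with hν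
    have hsub : Set.Ioc (0:ℝ) t ⊆ Set.Ioc (0:ℝ) tf := Set.Ioc_subset_Ioc le_rfl htf'
    have hle : ν ≤ μ := Measure.restrict_mono hsub le_rfl
    have hum : AEStronglyMeasurable u ν := hu.1.mono_measure hle
    have hubd : ∀ᵐ τ ∂ν, ‖u τ‖ ≤ N := hbd.filter_mono (ae_mono hle)
    set Mf : ℝ → Matrix (Fin m) (Fin m) ℝ := fun τ => C * mexp A (t - τ) * B with hMf
    have hMcont : Continuous Mf :=
      continuous_matrix fun i j => (hcont i j).comp (continuous_const.sub continuous_id)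
    set F : ℝ → Fin m → ℝ := fun τ => (Mf τ).mulVec (u τ) with hF
    letI : TopologicalSpace.PseudoMetrizableSpace (Matrix (Fin m) (Fin m) ℝ) :=
      inferInstanceAs (TopologicalSpace.PseudoMetrizableSpace (Fin m → Fin m → ℝ))
    have hFm : AEStronglyMeasurable F ν :=
      (continuous_fst.matrix_mulVec continuous_snd).comp_aestronglyMeasurable
        (hMcont.aestronglyMeasurable.prodMk hum)
    have hrowc : ∀ i : Fin m, Continuous fun τ => ∑ j, |Mf τ i j| :=
      fun i => continuous_finset_sum _ fun j _ => (hMcont.matrix_elem i j).abs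
    have hrnn : ∀ (τ : ℝ) (i : Fin m), 0 ≤ ∑ j, |Mf τ i j| :=
      fun τ i => Finset.sum_nonneg fun j _ => abs_nonneg _
    have hptw : ∀ᵐ τ ∂ν, ∀ i, |F τ i| ≤ (∑ j, |Mf τ i j|) * N := by
      filter_upwards [hubd] with τ hτ i
      calc |F τ i| = |∑ j, Mf τ i j * u τ j| := by
            simp [hF, Matrix.mulVec, dotProduct]
        _ ≤ ∑ j, |Mf τ i j * u τ j| := Finset.abs_sum_le_sum_abs _ _
        _ ≤ ∑ j, |Mf τ i j| * N := Finset.sum_le_sum fun j _ => by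
            rw [abs_mul]
            exact mul_le_mul_of_nonneg_left
              ((Real.norm_eq_abs _ ▸ norm_le_pi_norm (u τ) j).trans hτ) (abs_nonneg _)
        _ = (∑ j, |Mf τ i j|) * N := (Finset.sum_mul _ _ _).symm
    have hgint : IntegrableOn (fun τ => (∑ i, ∑ j, |Mf τ i j|) * N) (Set.Ioc 0 t) :=
      ((continuous_finset_sum _ fun i _ => hrowc i).mul continuous_const).integrableOn_Ioc
    have hFint : Integrable F ν := by
      refine Integrable.mono' hgint hFm ?_
      filter_upwards [hptw] with τ hτ
      rw [pi_norm_le_iff_of_nonneg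
        (mul_nonneg (Finset.sum_nonneg fun i _ => hrnn τ i) hN0)]
      intro i
      refine (Real.norm_eq_abs _ ▸ hτ i).trans ?_
      exact mul_le_mul_of_nonneg_right
        (Finset.single_le_sum (f := fun i' => ∑ j, |Mf τ i' j|)
          (fun i' _ => hrnn τ i') (Finset.mem_univ i)) hN0
    have hGop : Gop A B C 0 u t = ∫ τ in Set.Ioc (0:ℝ) t, F τ := by
      rw [Gop, intervalIntegral.integral_of_le ht0.le]
      simp [hF, hMf]
    rw [hGop, pi_norm_le_iff_of_nonneg (mul_nonneg hpk0 hN0)]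
    intro i
    have hFi : Integrable (fun τ => F τ i) ν :=
      (ContinuousLinearMap.proj (R := ℝ) (φ := fun _ : Fin m => ℝ) i).integrable_comp hFint
    have happ : (∫ τ in Set.Ioc (0:ℝ) t, F τ) i = ∫ τ in Set.Ioc (0:ℝ) t, F τ i :=
      ((ContinuousLinearMap.proj (R := ℝ) (φ := fun _ : Fin m => ℝ) i).integral_comp_comm
        hFint).symm
    have hgi : Integrable (fun τ => (∑ j, |Mf τ i j|) * N) ν :=
      ((hrowc i).mul continuous_const).integrableOn_Ioc
    have hI : (∫ τ in Set.Ioc (0:ℝ) t, ∑ j, |Mf τ i j|) ≤ pkGain A B C := by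
      have hsubst : (∫ τ in Set.Ioc (0:ℝ) t, ∑ j, |Mf τ i j|)
          = ∫ s in Set.Ioc (0:ℝ) t, ∑ j, |(C * mexp A s * B) i j| := by
        rw [← intervalIntegral.integral_of_le ht0.le, ← intervalIntegral.integral_of_le ht0.le]
        simpa using intervalIntegral.integral_comp_sub_left (a := (0:ℝ)) (b := t)
          (fun s => ∑ j, |(C * mexp A s * B) i j|) t
      rw [hsubst,
        integral_finset_sum _ fun j _ => ((hcont i j).abs.integrableOn_Ioc)]
      refine le_trans (Finset.sum_le_sum fun j _ => ?_) (hrow i)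
      exact setIntegral_mono_set (hfin i j)
        (ae_of_all _ fun s => abs_nonneg _)
        ((Set.Ioc_subset_Ioi_self).eventuallyLE)
    calc ‖(∫ τ in Set.Ioc (0:ℝ) t, F τ) i‖
        = |∫ τ in Set.Ioc (0:ℝ) t, F τ i| := by rw [happ, Real.norm_eq_abs]
      _ ≤ ∫ τ in Set.Ioc (0:ℝ) t, |F τ i| := by
          simpa [Real.norm_eq_abs] using norm_integral_le_integral_norm (fun τ => F τ i) (μ := ν)
      _ ≤ ∫ τ in Set.Ioc (0:ℝ) t, (∑ j, |Mf τ i j|) * N := by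
          refine integral_mono_ae hFi.abs hgi ?_
          filter_upwards [hptw] with τ hτ using hτ i
      _ = (∫ τ in Set.Ioc (0:ℝ) t, ∑ j, |Mf τ i j|) * N := integral_mul_const _ _
      _ ≤ pkGain A B C * N := mul_le_mul_of_nonneg_right hI hN0
  have hmain : eLpNorm (Gop A B C 0 u) ⊤ μ ≤ ENNReal.ofReal (pkGain A B C * N) := by
    rw [eLpNorm_exponent_top]
    apply eLpNormEssSup_le_of_ae_bound
    filter_upwards [ae_restrict_mem measurableSet_Ioc] with t ht
    exact key t ht
  calc eLpNorm (Gop A B C 0 u) ⊤ μ ≤ ENNReal.ofReal (pkGain A B C * N) := hmain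
    _ = ENNReal.ofReal (pkGain A B C) * ENNReal.ofReal N := ENNReal.ofReal_mul hpk0
    _ = ENNReal.ofReal (pkGain A B C) * eLpNorm u ⊤ μ := by
        rw [hNdef, ENNReal.ofReal_toReal hu.2.ne]
end

section
/- Assume D = 0 and that every entry of ∫_0^∞ |C·exp(At)·B| dt is finite, with peak-to-peak gain ‖G‖_pk = ‖∫_0^∞ |C·exp(At)·B| dt‖_∞. Then the operator 𝒮(u) = −R⁻¹·Σ·J𝒢(Σ·Q·(J𝒢u)) satisfies, for all u ∈ L^m_∞(0,t_f), ‖𝒮u‖_{∞,t_f} ≤ ‖R⁻¹‖_∞ · ‖G‖²_pk · ‖Q‖_∞ · ‖u‖_{∞,t_f}. -/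
open MeasureTheory Matrix Filter
open scoped ENNReal

section AuxLemmas

attribute [local instance] Matrix.linftyOpNormedAddCommGroup Matrix.linftyOpNormedRing
  Matrix.linftyOpNormedAlgebra

lemma mexp_cont {n : ℕ} (A : Matrix (Fin n) (Fin n) ℝ) : Continuous (mexp A) :=
  NormedSpace.exp_continuous.comp (continuous_id.smul continuous_const)

lemma entry_cont {n m : ℕ} (A : Matrix (Fin n) (Fin n) ℝ) (B : Matrix (Fin n) (Fin m) ℝ)
    (C : Matrix (Fin m) (Fin n) ℝ) (i : Fin m) (j : Fin m) :
    Continuous fun t => (C * mexp A t * B) i j := by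
  have h1 : Continuous fun M : Matrix (Fin n) (Fin n) ℝ => (C * M * B) i j := by
    simp only [Matrix.mul_apply]
    fun_prop
  exact h1.comp (mexp_cont A)

lemma rowSumNorm_nonneg {m : ℕ} (M : Matrix (Fin m) (Fin m) ℝ) : 0 ≤ rowSumNorm M :=
  Real.iSup_nonneg fun _ => Finset.sum_nonneg fun _ _ => abs_nonneg _

lemma rowSum_le {m : ℕ} (M : Matrix (Fin m) (Fin m) ℝ) (i : Fin m) :
    ∑ j, |M i j| ≤ rowSumNorm M := by
  exact le_ciSup (f := fun i => ∑ j, |M i j|) (Set.Finite.bddAbove (Set.finite_range _)) i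

lemma abs_mulVec_le_sum {m : ℕ} (M : Matrix (Fin m) (Fin m) ℝ) {w : Fin m → ℝ} {K : ℝ}
    (hw : ∀ j, |w j| ≤ K) (i : Fin m) : |(M.mulVec w) i| ≤ (∑ j, |M i j|) * K := by
  calc |(M.mulVec w) i| = |∑ j, M i j * w j| := rfl
    _ ≤ ∑ j, |M i j * w j| := Finset.abs_sum_le_sum_abs _ _
    _ ≤ ∑ j, |M i j| * K := Finset.sum_le_sum (fun j _ => by
        rw [abs_mul]; exact mul_le_mul_of_nonneg_left (hw j) (abs_nonneg _))
    _ = (∑ j, |M i j|) * K := (Finset.sum_mul _ _ _).symm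

lemma abs_mulVec_le {m : ℕ} (M : Matrix (Fin m) (Fin m) ℝ) {w : Fin m → ℝ} {K : ℝ} (hK : 0 ≤ K)
    (hw : ∀ j, |w j| ≤ K) (i : Fin m) : |(M.mulVec w) i| ≤ rowSumNorm M * K :=
  (abs_mulVec_le_sum M hw i).trans (mul_le_mul_of_nonneg_right (rowSum_le M i) hK)

lemma sig_mulVec_abs {m : ℕ} {Sg : Matrix (Fin m) (Fin m) ℝ} (hSg : IsSignature Sg)
    (w : Fin m → ℝ) (i : Fin m) : |(Sg.mulVec w) i| = |w i| := by
  obtain ⟨d, hd, rfl⟩ := hSg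
  rw [Matrix.mulVec_diagonal, abs_mul]
  rcases hd i with h | h <;> simp [h]

lemma pkGain_nonneg {n m : ℕ} (A : Matrix (Fin n) (Fin n) ℝ) (B : Matrix (Fin n) (Fin m) ℝ)
    (C : Matrix (Fin m) (Fin n) ℝ) : 0 ≤ pkGain A B C :=
  rowSumNorm_nonneg _

/-- Core bound: if `|w| ≤ Cw` a.e. on `(0,tf]`, then `|Gop w s| ≤ ‖G‖_pk Cw` for `s ∈ [0,tf]`. -/
lemma gop_abs_le {n m : ℕ} (A : Matrix (Fin n) (Fin n) ℝ) (B : Matrix (Fin n) (Fin m) ℝ)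
    (C : Matrix (Fin m) (Fin n) ℝ)
    (hfin : ∀ i j, IntegrableOn (fun t => |(C * mexp A t * B) i j|) (Set.Ioi 0))
    {tf : ℝ} (w : ℝ → Fin m → ℝ)
    (hw : AEStronglyMeasurable w (volume.restrict (Set.Ioc 0 tf)))
    {Cw : ℝ} (hCw : 0 ≤ Cw)
    (hbd : ∀ᵐ τ ∂(volume.restrict (Set.Ioc 0 tf)), ∀ i, |w τ i| ≤ Cw)
    {s : ℝ} (hs0 : 0 ≤ s) (hstf : s ≤ tf) (i : Fin m) :
    |Gop A B C 0 w s i| ≤ pkGain A B C * Cw := by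
  have hsub : Set.Ioc (0:ℝ) s ⊆ Set.Ioc 0 tf := Set.Ioc_subset_Ioc_right hstf
  have hmono : volume.restrict (Set.Ioc (0:ℝ) s) ≤ volume.restrict (Set.Ioc 0 tf) :=
    Measure.restrict_mono hsub le_rfl
  have hw' : AEStronglyMeasurable w (volume.restrict (Set.Ioc 0 s)) :=
    hw.mono_measure hmono
  have hbd' : ∀ᵐ τ ∂(volume.restrict (Set.Ioc 0 s)), ∀ i, |w τ i| ≤ Cw :=
    ae_mono hmono hbd
  set f : ℝ → Fin m → ℝ := fun τ => (C * mexp A (s - τ) * B).mulVec (w τ) with hf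
  -- measurability of f
  have hfm : AEStronglyMeasurable f (volume.restrict (Set.Ioc 0 s)) := by
    have : f = fun τ => ∑ j, w τ j • (fun i' => (C * mexp A (s - τ) * B) i' j) := by
      funext τ
      funext i'
      simp [hf, Matrix.mulVec, dotProduct, Finset.sum_apply, mul_comm]
    rw [this]
    refine Finset.aestronglyMeasurable_fun_sum _ fun j _ => ?_
    exact ((continuous_apply j).comp_aestronglyMeasurable hw').smul
      (Continuous.aestronglyMeasurable (by
        exact continuous_pi fun i' => (entry_cont A B C i' j).comp
          (continuous_const.sub continuous_id)))
  -- integrability of f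
  have hgcont : ∀ (q : ℝ → ℝ), Continuous q → IntegrableOn q (Set.Ioc 0 s) := fun q hq =>
    hq.integrableOn_Ioc
  have hfint : Integrable f (volume.restrict (Set.Ioc 0 s)) := by
    refine Integrable.mono' (g := fun τ => (∑ i', ∑ j, |(C * mexp A (s - τ) * B) i' j|) * Cw)
      ?_ hfm ?_
    · exact hgcont _ (by
        refine (continuous_finset_sum _ fun i' _ => continuous_finset_sum _ fun j _ => ?_).mul
          continuous_const
        exact ((entry_cont A B C i' j).comp (continuous_const.sub continuous_id)).abs)
    · filter_upwards [hbd'] with τ hτ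
      refine (pi_norm_le_iff_of_nonneg (by positivity)).2 fun i' => ?_
      have := abs_mulVec_le_sum (C * mexp A (s - τ) * B) hτ i'
      refine le_trans this ?_
      refine mul_le_mul_of_nonneg_right ?_ hCw
      exact Finset.single_le_sum (f := fun i' => ∑ j, |(C * mexp A (s - τ) * B) i' j|)
        (fun _ _ => Finset.sum_nonneg fun _ _ => abs_nonneg _) (Finset.mem_univ i')
  -- rewrite Gop
  have hGop : Gop A B C 0 w s i = (∫ τ in Set.Ioc 0 s, f τ) i := by
    simp [Gop, Matrix.zero_mulVec, intervalIntegral.integral_of_le hs0, hf]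
  rw [hGop]
  have hproj : (∫ τ in Set.Ioc 0 s, f τ) i = ∫ τ in Set.Ioc 0 s, f τ i :=
    ((ContinuousLinearMap.proj (R := ℝ) (φ := fun _ : Fin m => ℝ) i).integral_comp_comm
      hfint).symm
  rw [hproj]
  set q : ℝ → ℝ := fun τ => ∑ j, |(C * mexp A τ * B) i j| with hq
  have hqcont : Continuous q := continuous_finset_sum _ fun j _ => (entry_cont A B C i j).abs
  have step1 : |∫ τ in Set.Ioc 0 s, f τ i| ≤ ∫ τ in Set.Ioc 0 s, q (s - τ) * Cw := by
    rw [← Real.norm_eq_abs]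
    refine (norm_integral_le_integral_norm _).trans ?_
    simp only [Real.norm_eq_abs]
    refine integral_mono_of_nonneg (Eventually.of_forall fun τ => abs_nonneg _)
      (hgcont _ ((hqcont.comp (continuous_const.sub continuous_id)).mul
        continuous_const)) ?_
    filter_upwards [hbd'] with τ hτ
    exact abs_mulVec_le_sum _ hτ i
  have step2 : ∫ τ in Set.Ioc 0 s, q (s - τ) * Cw = (∫ τ in Set.Ioc 0 s, q τ) * Cw := by
    rw [integral_mul_const]
    congr 1
    rw [← intervalIntegral.integral_of_le hs0, ← intervalIntegral.integral_of_le hs0,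
      intervalIntegral.integral_comp_sub_left q s, sub_self, sub_zero]
  have step3 : ∫ τ in Set.Ioc 0 s, q τ ≤ pkGain A B C := by
    have h1 : ∫ τ in Set.Ioc 0 s, q τ = ∑ j, ∫ τ in Set.Ioc 0 s, |(C * mexp A τ * B) i j| := by
      rw [hq]
      exact integral_finset_sum _ fun j _ => hgcont _ (entry_cont A B C i j).abs
    rw [h1]
    have h2 : ∀ j, ∫ τ in Set.Ioc 0 s, |(C * mexp A τ * B) i j|
        ≤ ∫ τ in Set.Ioi 0, |(C * mexp A τ * B) i j| := fun j =>
      setIntegral_mono_set (hfin i j) (Eventually.of_forall fun τ => abs_nonneg _)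
        (HasSubset.Subset.eventuallyLE Set.Ioc_subset_Ioi_self)
    refine (Finset.sum_le_sum fun j _ => h2 j).trans ?_
    have h3 : ∀ j, (0:ℝ) ≤ ∫ τ in Set.Ioi 0, |(C * mexp A τ * B) i j| := fun j =>
      integral_nonneg fun τ => abs_nonneg _
    have h4 := rowSum_le (Matrix.of fun i j => ∫ t in Set.Ioi (0:ℝ), |(C * mexp A t * B) i j|) i
    simp only [Matrix.of_apply] at h4
    refine le_trans ?_ h4
    exact Finset.sum_le_sum fun j _ => le_abs_self _
  exact (step1.trans_eq step2).trans (mul_le_mul_of_nonneg_right step3 hCw)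

end AuxLemmas
section Meas

/-- Measurability of `s ↦ Σ Q (𝒢u)(tf - s)` on `(0, tf]`. -/
lemma gop_w_aemeas {n m : ℕ} (A : Matrix (Fin n) (Fin n) ℝ) (B : Matrix (Fin n) (Fin m) ℝ)
    (C : Matrix (Fin m) (Fin n) ℝ) (Sg Q : Matrix (Fin m) (Fin m) ℝ) {tf : ℝ}
    (u : ℝ → Fin m → ℝ)
    (hu : AEStronglyMeasurable u (volume.restrict (Set.Ioc 0 tf))) :
    AEStronglyMeasurable (fun s => Sg.mulVec (Q.mulVec (Gop A B C 0 u (tf - s))))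
      (volume.restrict (Set.Ioc 0 tf)) := by
  set u' := hu.mk u with hu'def
  have hu'sm : StronglyMeasurable u' := hu.stronglyMeasurable_mk
  have heq : u =ᵐ[volume.restrict (Set.Ioc 0 tf)] u' := hu.ae_eq_mk
  set F : ℝ × ℝ → (Fin m → ℝ) := fun p =>
    if p.2 ∈ Set.Ioc 0 p.1 then (C * mexp A (p.1 - p.2) * B).mulVec (u' p.2) else 0 with hF
  have hFm : StronglyMeasurable F := by
    apply Measurable.stronglyMeasurable
    apply Measurable.ite
    · exact (measurableSet_lt measurable_const measurable_snd).inter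
        (measurableSet_le measurable_snd measurable_fst)
    · apply measurable_pi_lambda
      intro i
      have h : (fun p : ℝ × ℝ => ((C * mexp A (p.1 - p.2) * B).mulVec (u' p.2)) i)
          = fun p : ℝ × ℝ => ∑ j, (C * mexp A (p.1 - p.2) * B) i j * u' p.2 j := rfl
      rw [h]
      refine Finset.measurable_sum _ fun j _ => Measurable.mul ?_ ?_
      · exact ((entry_cont A B C i j).comp (continuous_fst.sub continuous_snd)).measurable
      · exact (measurable_pi_apply j).comp (hu'sm.measurable.comp measurable_snd)
    · exact measurable_const
  have hIm : StronglyMeasurable (fun x : ℝ => ∫ τ, F (x, τ)) :=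
    hFm.integral_prod_right'
  have hkey : ∀ x, 0 ≤ x → x ≤ tf → Gop A B C 0 u x = ∫ τ, F (x, τ) := by
    intro x hx0 hxtf
    have h1 : Gop A B C 0 u x = ∫ τ in Set.Ioc 0 x, (C * mexp A (x - τ) * B).mulVec (u τ) := by
      simp [Gop, Matrix.zero_mulVec, intervalIntegral.integral_of_le hx0]
    have h2 : (fun τ => (C * mexp A (x - τ) * B).mulVec (u τ))
        =ᵐ[volume.restrict (Set.Ioc 0 x)]
        (fun τ => (C * mexp A (x - τ) * B).mulVec (u' τ)) := by
      have h3 := heq.filter_mono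
        (ae_mono (Measure.restrict_mono (Set.Ioc_subset_Ioc_right hxtf) le_rfl))
      filter_upwards [h3] with τ hτ
      rw [hτ]
    rw [h1, integral_congr_ae h2, ← integral_indicator measurableSet_Ioc]
    congr 1
    funext τ
    simp only [Set.indicator_apply, hF]
  have hweq : (fun s => Sg.mulVec (Q.mulVec (∫ τ, F (tf - s, τ))))
      =ᵐ[volume.restrict (Set.Ioc 0 tf)]
      (fun s => Sg.mulVec (Q.mulVec (Gop A B C 0 u (tf - s)))) := by
    filter_upwards [ae_restrict_mem measurableSet_Ioc] with s hs
    rw [hkey (tf - s) (by linarith [hs.2]) (by linarith [hs.1])]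
  refine AEStronglyMeasurable.congr ?_ hweq
  have hc : Continuous fun v : Fin m → ℝ => Sg.mulVec (Q.mulVec v) := by
    have h1 : Continuous fun v : Fin m → ℝ => Sg.mulVec v := by
      exact (Matrix.mulVecLin Sg).continuous_of_finiteDimensional
    have h2 : Continuous fun v : Fin m → ℝ => Q.mulVec v := by
      exact (Matrix.mulVecLin Q).continuous_of_finiteDimensional
    exact h1.comp h2
  exact (hc.comp_stronglyMeasurable (hIm.comp_measurable
    (measurable_const.sub measurable_id))).aestronglyMeasurable

end Meas
/-- with D = 0, ‖𝒮u‖_{∞,t_f} ≤ ‖R⁻¹‖_∞ ‖G‖²_pk ‖Q‖_∞ ‖u‖_{∞,t_f}. -/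
theorem S_Linf_gain_le {n m : ℕ}
    (A : Matrix (Fin n) (Fin n) ℝ) (B : Matrix (Fin n) (Fin m) ℝ)
    (C : Matrix (Fin m) (Fin n) ℝ)
    (hfin : ∀ i j, IntegrableOn (fun t => |(C * mexp A t * B) i j|) (Set.Ioi 0))
    (Sg Q R : Matrix (Fin m) (Fin m) ℝ)
    (hSg : IsSignature Sg) (hQ : Q.PosSemidef) (hR : R.PosDef)
    (tf : ℝ) (htf : 0 < tf) (u : ℝ → Fin m → ℝ) (hu : MemLinf tf u) :
    eLpNorm (SOp A B C 0 Sg Q R tf u) ⊤ (volume.restrict (Set.Ioc 0 tf))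
      ≤ ENNReal.ofReal (rowSumNorm R⁻¹ * pkGain A B C ^ 2 * rowSumNorm Q)
          * eLpNorm u ⊤ (volume.restrict (Set.Ioc 0 tf)) := by
  set μ := volume.restrict (Set.Ioc (0:ℝ) tf) with hμ
  obtain ⟨hum, hufin⟩ := hu
  set Cu := (eLpNorm u ⊤ μ).toReal with hCu
  have hCu0 : 0 ≤ Cu := ENNReal.toReal_nonneg
  have hufin' : eLpNorm u ⊤ μ ≠ ⊤ := hufin.ne
  have hbdu : ∀ᵐ τ ∂μ, ∀ i, |u τ i| ≤ Cu := by
    filter_upwards [ae_le_eLpNormEssSup (f := u) (μ := μ)] with τ hτ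
    intro i
    have h1 : ‖u τ‖ ≤ Cu := by
      have h2 := ENNReal.toReal_mono (by rwa [eLpNorm_exponent_top] at hufin') hτ
      simpa [hCu, eLpNorm_exponent_top] using h2
    exact le_trans (Real.norm_eq_abs (u τ i) ▸ norm_le_pi_norm (u τ) i) h1
  have hpk0 := pkGain_nonneg A B C
  set w := fun s => Sg.mulVec (Q.mulVec (Gop A B C 0 u (tf - s))) with hwdef
  have hwm : AEStronglyMeasurable w μ := gop_w_aemeas A B C Sg Q u hum
  set Cw := rowSumNorm Q * (pkGain A B C * Cu) with hCwdef
  have hCw0 : 0 ≤ Cw := mul_nonneg (rowSumNorm_nonneg Q) (mul_nonneg hpk0 hCu0)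
  have hbdw : ∀ᵐ s ∂μ, ∀ j, |w s j| ≤ Cw := by
    filter_upwards [ae_restrict_mem measurableSet_Ioc] with s hs
    intro j
    rw [hwdef]
    simp only
    rw [sig_mulVec_abs hSg]
    exact abs_mulVec_le Q (mul_nonneg hpk0 hCu0)
      (fun j' => gop_abs_le A B C hfin u hum hCu0 hbdu
        (by linarith [hs.2]) (by linarith [hs.1]) j') j
  set Cst := rowSumNorm R⁻¹ * (pkGain A B C * Cw) with hCstdef
  have hCst0 : 0 ≤ Cst := mul_nonneg (rowSumNorm_nonneg _) (mul_nonneg hpk0 hCw0)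
  have hSbd : ∀ᵐ t ∂μ, ‖SOp A B C 0 Sg Q R tf u t‖ ≤ Cst := by
    filter_upwards [ae_restrict_mem measurableSet_Ioc] with t ht
    refine (pi_norm_le_iff_of_nonneg hCst0).2 fun i => ?_
    have hrw : SOp A B C 0 Sg Q R tf u t
        = -(R⁻¹.mulVec (Sg.mulVec (Gop A B C 0 w (tf - t)))) := rfl
    rw [hrw, Real.norm_eq_abs, Pi.neg_apply, abs_neg]
    exact abs_mulVec_le R⁻¹ (mul_nonneg hpk0 hCw0)
      (fun j => by
        rw [sig_mulVec_abs hSg]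
        exact gop_abs_le A B C hfin w hwm hCw0 hbdw
          (by linarith [ht.2]) (by linarith [ht.1]) j) i
  have hle := eLpNorm_le_of_ae_bound (p := (⊤:ℝ≥0∞)) (μ := μ) hSbd
  refine le_trans hle ?_
  have htop : ((⊤:ℝ≥0∞).toReal)⁻¹ = 0 := by simp
  rw [htop, ENNReal.rpow_zero, one_mul]
  have hCsteq : Cst = (rowSumNorm R⁻¹ * pkGain A B C ^ 2 * rowSumNorm Q) * Cu := by
    rw [hCstdef, hCwdef]; ring
  rw [hCsteq, ENNReal.ofReal_mul (mul_nonneg (mul_nonneg (rowSumNorm_nonneg _)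
    (pow_nonneg hpk0 2)) (rowSumNorm_nonneg _))]
  rw [hCu, ENNReal.ofReal_toReal hufin']
end

section
/- Let M ∈ ℂ^{n×n} and b ∈ ℂ^n. The Krylov matrix [b, M·b, M²·b, …, M^{n−1}·b] ∈ ℂ^{n×n} is invertible if and only if there is no nonzero left eigenvector of M orthogonal to b, i.e., if and only if there exist no μ ∈ ℂ and nonzero w ∈ ℂ^n with w*·M = μ·w* and w*·b = 0. -/
/-!
A vector `v` kills every column of the Krylov matrix iff it is orthogonal to `M ^ k *ᵥ b` for
`k < n`, and by Cayley–Hamilton then for every `k`. Those `v` form a subspace that is invariant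
under `v ↦ v ᵥ* M`, so over `ℂ` it is either zero or contains a left eigenvector of `M`; such an
eigenvector is orthogonal to `b`. Conversely a left eigenvector `w` with `w ⬝ᵥ b = 0` satisfies
`w ⬝ᵥ M ^ k *ᵥ b = μ ^ k * (w ⬝ᵥ b) = 0` for all `k`.
-/

open Matrix Polynomial

theorem Module.End.exists_hasEigenvector_mem_of_invariant {K V : Type*} [Field K] [IsAlgClosed K]
    [AddCommGroup V] [Module K V] [FiniteDimensional K V] (f : Module.End K V)
    {p : Submodule K V} (hfp : ∀ x ∈ p, f x ∈ p) (hp : p ≠ ⊥) :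
    ∃ μ x, x ∈ p ∧ f.HasEigenvector μ x := by
  have : Nontrivial p := Submodule.nontrivial_iff_ne_bot.mpr hp
  obtain ⟨μ, hμ⟩ := Module.End.exists_eigenvalue (f.restrict hfp)
  obtain ⟨x, hx_mem, hx_ne⟩ := hμ.exists_hasEigenvector
  refine ⟨μ, x, x.prop, f.eigenspace_restrict_le_eigenspace hfp μ ⟨x, hx_mem, rfl⟩, ?_⟩
  exact_mod_cast hx_ne

theorem Matrix.vecMul_pow_of_vecMul_eq_smul {ι R : Type*} [Fintype ι] [DecidableEq ι] [CommRing R]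
    {M : Matrix ι ι R} {w : ι → R} {μ : R} (h : w ᵥ* M = μ • w) (k : ℕ) :
    w ᵥ* (M ^ k) = μ ^ k • w := by
  induction k with
  | zero => simp
  | succ k ih => rw [pow_succ, ← vecMul_vecMul, ih, smul_vecMul, h, smul_smul, pow_succ]

namespace Matrix

variable {ι R : Type*} [Fintype ι] [DecidableEq ι] [CommRing R]

def krylovAnnihilator (M : Matrix ι ι R) (b : ι → R) : Submodule R (ι → R) where
  carrier := {v | ∀ k : ℕ, v ⬝ᵥ (M ^ k *ᵥ b) = 0}
  add_mem' h₁ h₂ k := by rw [add_dotProduct, h₁ k, h₂ k, add_zero]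
  zero_mem' k := zero_dotProduct _
  smul_mem' c v hv k := by rw [smul_dotProduct, hv k, smul_zero]

variable {M : Matrix ι ι R} {b v : ι → R}

theorem mem_krylovAnnihilator_of_forall_lt_card [Nontrivial R]
    (h : ∀ j < Fintype.card ι, v ⬝ᵥ (M ^ j *ᵥ b) = 0) : v ∈ krylovAnnihilator M b := by
  intro k
  rw [pow_eq_aeval_mod_charpoly, aeval_eq_sum_range, sum_mulVec, dotProduct_sum]
  refine Finset.sum_eq_zero fun j _ => ?_
  rw [smul_mulVec, dotProduct_smul]
  by_cases hj : j < Fintype.card ι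
  · rw [h j hj, smul_zero]
  · have hdeg : (X ^ k %ₘ M.charpoly).degree < j := by
      calc (X ^ k %ₘ M.charpoly).degree < M.charpoly.degree :=
            degree_modByMonic_lt _ M.charpoly_monic
        _ = Fintype.card ι := M.charpoly_degree_eq_dim
        _ ≤ j := by exact_mod_cast not_lt.mp hj
    rw [coeff_eq_zero_of_degree_lt hdeg, zero_smul]

theorem vecMul_mem_krylovAnnihilator (hv : v ∈ krylovAnnihilator M b) :
    v ᵥ* M ∈ krylovAnnihilator M b := fun k => by
  rw [← dotProduct_mulVec, mulVec_mulVec, ← pow_succ']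
  exact hv (k + 1)

theorem mem_krylovAnnihilator_of_vecMul_eq_smul {μ : R} (hM : v ᵥ* M = μ • v) (hb : v ⬝ᵥ b = 0) :
    v ∈ krylovAnnihilator M b := fun k => by
  rw [dotProduct_mulVec, vecMul_pow_of_vecMul_eq_smul hM, smul_dotProduct, hb, smul_zero]

theorem krylovAnnihilator_ne_bot_iff {K : Type*} [Field K] [IsAlgClosed K] {M : Matrix ι ι K}
    {b : ι → K} :
    krylovAnnihilator M b ≠ ⊥ ↔ ∃ (μ : K) (w : ι → K), w ≠ 0 ∧ w ᵥ* M = μ • w ∧ w ⬝ᵥ b = 0 := by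
  constructor
  · intro hA
    obtain ⟨μ, w, hwA, hw⟩ :=
      Module.End.exists_hasEigenvector_mem_of_invariant M.vecMulLinear
        (fun _ => vecMul_mem_krylovAnnihilator) hA
    refine ⟨μ, w, hw.2, Module.End.mem_eigenspace_iff.mp hw.1, ?_⟩
    simpa using hwA 0
  · rintro ⟨μ, w, hw, hM, hb⟩
    exact (Submodule.ne_bot_iff _).mpr ⟨w, mem_krylovAnnihilator_of_vecMul_eq_smul hM hb, hw⟩

end Matrix

def krylovMatrix {n : ℕ} {R : Type*} [Semiring R] (M : Matrix (Fin n) (Fin n) R) (b : Fin n → R) :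
    Matrix (Fin n) (Fin n) R :=
  Matrix.of fun i j : Fin n => (M ^ (j : ℕ)).mulVec b i

theorem vecMul_krylovMatrix_eq_zero_iff {n : ℕ} {R : Type*} [CommRing R] [Nontrivial R]
    {M : Matrix (Fin n) (Fin n) R} {b v : Fin n → R} :
    v ᵥ* krylovMatrix M b = 0 ↔ v ∈ krylovAnnihilator M b := by
  have hcol (j : Fin n) : (v ᵥ* krylovMatrix M b) j = v ⬝ᵥ (M ^ (j : ℕ) *ᵥ b) := by
    simp [krylovMatrix, vecMul, dotProduct]
  refine ⟨fun h => mem_krylovAnnihilator_of_forall_lt_card fun j hj => ?_, fun h => ?_⟩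
  · simpa [hcol] using congrFun h ⟨j, by simpa using hj⟩
  · ext j
    rw [hcol, h j, Pi.zero_apply]

/-- the Krylov matrix [b, Mb, …, M^{n−1}b] is invertible iff no
nonzero left eigenvector of M is orthogonal to b. -/
theorem krylov_invertible_iff {n : ℕ} (M : Matrix (Fin n) (Fin n) ℂ) (b : Fin n → ℂ) :
    IsUnit (Matrix.of fun i j : Fin n => (M ^ (j : ℕ)).mulVec b i) ↔
      ¬ ∃ (μ : ℂ) (w : Fin n → ℂ), w ≠ 0 ∧
          Matrix.vecMul (star w) M = μ • star w ∧ star w ⬝ᵥ b = 0 := by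
  have star_iff : (∃ (μ : ℂ) (w : Fin n → ℂ), w ≠ 0 ∧
      star w ᵥ* M = μ • star w ∧ star w ⬝ᵥ b = 0) ↔
        ∃ (μ : ℂ) (w : Fin n → ℂ), w ≠ 0 ∧ w ᵥ* M = μ • w ∧ w ⬝ᵥ b = 0 :=
    exists_congr fun μ => by
      rw [star_involutive.surjective.exists]
      simp only [star_star, star_ne_zero]
  change IsUnit (krylovMatrix M b) ↔ _
  rw [star_iff, ← krylovAnnihilator_ne_bot_iff, Submodule.ne_bot_iff, isUnit_iff_isUnit_det,
    isUnit_iff_ne_zero, Ne, ← exists_vecMul_eq_zero_iff, not_iff_not]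
  exact exists_congr fun v => by rw [vecMul_krylovMatrix_eq_zero_iff, and_comm]
end
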